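/- arXiv:1804.11050 — 8 statements merged into one kernel-verified Lean document; each statement's English description precedes it below -/
import Mathlib

section
/- Let d ≥ 1 and let M be a submonoid of ℤ^d whose ℚ-linear span is all of ℚ^d. Let ⪯ be a total order on M such that (i) for m, m' ∈ M with m' − m ∈ M one has m ⪯ m', and (ii) for all m, m', k ∈ M, m ⪯ m' implies m + k ⪯ m' + k. Then there exists a total order ⪯' on ℚ^d extending ⪯ (i.e., agreeing with ⪯ on M) which is invariant under translation (q ⪯' q' implies q + p ⪯' q' + p for all p ∈ ℚ^d) and invariant under multiplication by positive rational scalars (q ⪯' q' implies cq ⪯' cq' for all rational c > 0). -/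
/-!
Call `v ∈ ℚ^d` nonnegative when some positive multiple `n • v` equals `b - a` with `a ⪯ b` in
`M`, and put `x ⪯' y` iff `y - x` is nonnegative. The nonnegative vectors form a cone
(compatibility of `⪯` with addition), which is salient because `a ⪯ b`, `a' ⪯ b'` and
`b + b' = a + a'` force `a = b`. Every vector has a positive multiple in `M - M`, since `M` spans
`ℚ^d`; totality of `⪯` then makes `⪯'` total.
-/

open Submodule

section RatSaturation

variable {V : Type*} [AddCommGroup V] [Module ℚ V]

lemma Rat.den_nsmul_smul_of_nonneg {c : ℚ} (hc : 0 ≤ c) (v : V) :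
    c.den • c • v = c.num.toNat • v := by
  rw [← Nat.cast_smul_eq_nsmul ℚ, ← Nat.cast_smul_eq_nsmul ℚ, smul_smul, Rat.den_mul_eq_num]
  congr 1
  exact_mod_cast (Int.toNat_of_nonneg (Rat.num_nonneg.mpr hc)).symm

lemma eq_zero_of_nsmul_eq_zero {n : ℕ} (hn : 0 < n) {v : V} (h : n • v = 0) : v = 0 := by
  rw [← Nat.cast_smul_eq_nsmul ℚ] at h
  exact (smul_eq_zero.mp h).resolve_left (by positivity)

def AddSubmonoid.ratSaturation (P : AddSubmonoid V) : PointedCone ℚ V where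
  carrier := {v | ∃ n : ℕ, 0 < n ∧ n • v ∈ P}
  zero_mem' := ⟨1, one_pos, by simp⟩
  add_mem' := by
    rintro x y ⟨n, hn, hx⟩ ⟨m, hm, hy⟩
    refine ⟨n * m, Nat.mul_pos hn hm, ?_⟩
    rw [smul_add, mul_nsmul, mul_nsmul']
    exact add_mem (nsmul_mem hx m) (nsmul_mem hy n)
  smul_mem' := by
    rintro ⟨c, hc⟩ v ⟨n, hn, hv⟩
    refine ⟨n * c.den, Nat.mul_pos hn c.den_pos, ?_⟩
    change (n * c.den) • c • v ∈ P
    rw [mul_nsmul', Rat.den_nsmul_smul_of_nonneg hc, smul_comm]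
    exact nsmul_mem hv _

namespace AddSubmonoid

variable {P : AddSubmonoid V} {v : V}

lemma mem_ratSaturation_of_mem (hv : v ∈ P) : v ∈ P.ratSaturation := ⟨1, one_pos, by simpa⟩

lemma eq_zero_of_mem_ratSaturation_of_neg_mem (hP : ∀ w ∈ P, -w ∈ P → w = 0)
    (hv : v ∈ P.ratSaturation) (hv' : -v ∈ P.ratSaturation) : v = 0 := by
  obtain ⟨n, hn, hnv⟩ := hv
  obtain ⟨m, hm, hmv⟩ := hv'
  have hpos : (m * n) • v ∈ P := by rw [mul_nsmul']; exact nsmul_mem hnv m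
  have hneg : -((m * n) • v) ∈ P := by rw [← smul_neg, mul_nsmul]; exact nsmul_mem hmv n
  exact eq_zero_of_nsmul_eq_zero (Nat.mul_pos hm hn) (hP _ hpos hneg)

end AddSubmonoid

lemma AddSubgroup.span_le_lineal_ratSaturation (G : AddSubgroup V) :
    span ℚ (G : Set V) ≤ G.toAddSubmonoid.ratSaturation.lineal :=
  span_le.mpr fun _ hv => PointedCone.mem_lineal.mpr
    ⟨AddSubmonoid.mem_ratSaturation_of_mem hv,
      AddSubmonoid.mem_ratSaturation_of_mem (G.neg_mem hv)⟩

end RatSaturation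

section CompatibleOrder

variable {M : Type*} [AddCommMonoid M] {le : M → M → Prop}
  (hadd : ∀ a b k, le a b → le (a + k) (b + k))
include hadd

lemma le_add_of_le_of_le [IsTrans M le] {a b a' b' : M} (h : le a b) (h' : le a' b') :
    le (a + a') (b + b') :=
  trans_of le (hadd a b a' h) (by simpa only [add_comm b] using hadd a' b' b h')

lemma eq_of_le_of_le_of_add_eq [IsRightCancelAdd M] [Std.Antisymm le] {a b a' b' : M}
    (h : le a b) (h' : le a' b') (hsum : b + b' = a + a') : a = b := by
  have h₁ : le (a + a') (b + a') := hadd a b a' h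
  have h₂ : le (b + a') (a + a') := by
    have := hadd a' b' b h'
    rwa [add_comm a', add_comm b', hsum] at this
  exact add_right_cancel (antisymm h₁ h₂)

end CompatibleOrder

section ExtensionCone

variable {M V : Type*} [AddCommMonoid M] [AddCommGroup V] (ι : M →+ V)

def AddMonoidHom.diffSubgroup : AddSubgroup V where
  carrier := {v | ∃ a b, ι b - ι a = v}
  zero_mem' := ⟨0, 0, sub_self _⟩
  add_mem' := by
    rintro _ _ ⟨a, b, rfl⟩ ⟨a', b', rfl⟩
    exact ⟨a + a', b + b', by simp only [map_add]; abel⟩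
  neg_mem' := by
    rintro _ ⟨a, b, rfl⟩
    exact ⟨b, a, (neg_sub _ _).symm⟩

lemma AddMonoidHom.exists_nsmul_eq_sub_of_mem_span [Module ℚ V] {v : V}
    (hv : v ∈ span ℚ (Set.range ι)) :
    ∃ n : ℕ, 0 < n ∧ ∃ a b, n • v = ι b - ι a := by
  have hrange : Set.range ι ⊆ ι.diffSubgroup := by
    rintro _ ⟨m, rfl⟩
    exact ⟨0, m, by simp⟩
  obtain ⟨n, hn, a, b, hab⟩ := (PointedCone.mem_lineal.mp
    (ι.diffSubgroup.span_le_lineal_ratSaturation (span_mono hrange hv))).1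
  exact ⟨n, hn, a, b, hab.symm⟩

variable (le : M → M → Prop) [Std.Refl le] [IsTrans M le]
  (hadd : ∀ a b k, le a b → le (a + k) (b + k))

def AddMonoidHom.nonnegDiffs : AddSubmonoid V where
  carrier := {v | ∃ a b, le a b ∧ ι b - ι a = v}
  zero_mem' := ⟨0, 0, refl_of le 0, sub_self _⟩
  add_mem' := by
    rintro _ _ ⟨a, b, hab, rfl⟩ ⟨a', b', hab', rfl⟩
    exact ⟨a + a', b + b', le_add_of_le_of_le hadd hab hab', by simp only [map_add]; abel⟩

variable {ι le hadd}

lemma AddMonoidHom.mem_or_neg_mem_ratSaturation_nonnegDiffs [Module ℚ V] [Std.Total le] {v : V}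
    (hv : v ∈ span ℚ (Set.range ι)) :
    v ∈ (ι.nonnegDiffs le hadd).ratSaturation ∨ -v ∈ (ι.nonnegDiffs le hadd).ratSaturation := by
  obtain ⟨n, hn, a, b, hab⟩ := ι.exists_nsmul_eq_sub_of_mem_span hv
  obtain h | h := total_of le a b
  · exact .inl ⟨n, hn, a, b, h, hab.symm⟩
  · exact .inr ⟨n, hn, b, a, h, by rw [smul_neg, hab, neg_sub]⟩

variable [IsRightCancelAdd M] [Std.Antisymm le] (hι : Function.Injective ι)
include hι

lemma AddMonoidHom.eq_zero_of_mem_nonnegDiffs_of_neg_mem {w : V}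
    (hw : w ∈ ι.nonnegDiffs le hadd) (hw' : -w ∈ ι.nonnegDiffs le hadd) : w = 0 := by
  obtain ⟨a, b, hab, rfl⟩ := hw
  obtain ⟨a', b', hab', hneg⟩ := hw'
  have hsum : b + b' = a + a' := by
    apply hι
    rw [map_add, map_add, sub_eq_iff_eq_add.mp hneg]
    abel
  rw [eq_of_le_of_le_of_add_eq hadd hab hab' hsum, sub_self]

lemma AddMonoidHom.eq_zero_of_mem_ratSaturation_nonnegDiffs_of_neg_mem [Module ℚ V] {v : V}
    (hv : v ∈ (ι.nonnegDiffs le hadd).ratSaturation)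
    (hv' : -v ∈ (ι.nonnegDiffs le hadd).ratSaturation) : v = 0 :=
  AddSubmonoid.eq_zero_of_mem_ratSaturation_of_neg_mem
    (fun _ => ι.eq_zero_of_mem_nonnegDiffs_of_neg_mem hι) hv hv'

lemma AddMonoidHom.sub_mem_ratSaturation_nonnegDiffs_iff [Module ℚ V] [Std.Total le]
    {a b : M} :
    ι b - ι a ∈ (ι.nonnegDiffs le hadd).ratSaturation ↔ le a b := by
  refine ⟨fun h => ?_, fun h => AddSubmonoid.mem_ratSaturation_of_mem ⟨a, b, h, rfl⟩⟩
  obtain hab | hba := total_of le a b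
  · exact hab
  have hneg : -(ι b - ι a) ∈ (ι.nonnegDiffs le hadd).ratSaturation :=
    AddSubmonoid.mem_ratSaturation_of_mem ⟨b, a, hba, (neg_sub _ _).symm⟩
  have hab : a = b :=
    hι (sub_eq_zero.mp (ι.eq_zero_of_mem_ratSaturation_nonnegDiffs_of_neg_mem hι h hneg)).symm
  exact hab ▸ refl_of le a

end ExtensionCone

theorem monomial_order_extends_to_rat_vector_space_general
    (d : ℕ) (M : AddSubmonoid (Fin d → ℤ))
    (hspan : Submodule.span ℚ
      ((fun m : Fin d → ℤ => fun i => (m i : ℚ)) '' (M : Set (Fin d → ℤ))) = ⊤)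
    (le : M → M → Prop)
    (htrans : ∀ a b c, le a b → le b c → le a c)
    (hantisymm : ∀ a b, le a b → le b a → a = b)
    (htotal : ∀ a b, le a b ∨ le b a)
    (hadd : ∀ a b k : M, le a b → le (a + k) (b + k)) :
    ∃ le' : (Fin d → ℚ) → (Fin d → ℚ) → Prop,
      (∀ x, le' x x) ∧
      (∀ x y z, le' x y → le' y z → le' x z) ∧
      (∀ x y, le' x y → le' y x → x = y) ∧
      (∀ x y, le' x y ∨ le' y x) ∧
      (∀ a b : M, (le' (fun i => ((a : Fin d → ℤ) i : ℚ)) (fun i => ((b : Fin d → ℤ) i : ℚ))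
        ↔ le a b)) ∧
      (∀ x y p : Fin d → ℚ, le' x y → le' (x + p) (y + p)) ∧
      (∀ (x y : Fin d → ℚ) (c : ℚ), 0 < c → le' x y → le' (c • x) (c • y)) := by
  have : IsTrans M le := ⟨htrans⟩
  have : Std.Antisymm le := ⟨hantisymm⟩
  have : Std.Total le := ⟨htotal⟩
  let ι : M →+ (Fin d → ℚ) := ((Int.castAddHom ℚ).compLeft (Fin d)).comp M.subtype
  have hι : Function.Injective ι := Int.cast_injective.comp_left.comp Subtype.val_injective
  have hrange : span ℚ (Set.range ι) = ⊤ := by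
    rwa [AddMonoidHom.coe_comp, Set.range_comp, AddSubmonoid.coe_subtype, Subtype.range_coe]
  let C := (ι.nonnegDiffs le hadd).ratSaturation
  refine ⟨fun x y => y - x ∈ C, fun x => ?_, fun x y z hxy hyz => ?_, fun x y hxy hyx => ?_,
    fun x y => ?_, fun a b => ι.sub_mem_ratSaturation_nonnegDiffs_iff hι, fun x y p h => ?_,
    fun x y c hc h => ?_⟩
  · simp only [sub_self, C.zero_mem]
  · simpa only [sub_add_sub_cancel'] using C.add_mem hxy hyz
  · exact (sub_eq_zero.mp (ι.eq_zero_of_mem_ratSaturation_nonnegDiffs_of_neg_mem hι hxy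
      (by rwa [neg_sub]))).symm
  · simpa only [neg_sub] using
      ι.mem_or_neg_mem_ratSaturation_nonnegDiffs (hrange ▸ mem_top : y - x ∈ _)
  · simpa only [add_sub_add_right_eq_sub] using h
  · simpa only [← smul_sub] using C.smul_mem hc.le h

/-- let `d ≥ 1` and let `M` be a submonoid of `ℤ^d` whose `ℚ`-linear span is
all of `ℚ^d`.  Let `⪯` be a total order on `M` such that (i) `m ⪯ m'` whenever
`m' − m ∈ M`, and (ii) `m ⪯ m'` implies `m + k ⪯ m' + k` for all `k ∈ M`.  Then there is a
total order `⪯'` on `ℚ^d` agreeing with `⪯` on `M`, invariant under translation and under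
multiplication by positive rational scalars. -/
theorem monomial_order_extends_to_rat_vector_space
    (d : ℕ) (hd : 1 ≤ d) (M : AddSubmonoid (Fin d → ℤ))
    (hspan : Submodule.span ℚ
      ((fun m : Fin d → ℤ => fun i => (m i : ℚ)) '' (M : Set (Fin d → ℤ))) = ⊤)
    (le : M → M → Prop)
    (hrefl : ∀ a, le a a)
    (htrans : ∀ a b c, le a b → le b c → le a c)
    (hantisymm : ∀ a b, le a b → le b a → a = b)
    (htotal : ∀ a b, le a b ∨ le b a)
    (hdvd : ∀ a b : M, ((b : Fin d → ℤ) - (a : Fin d → ℤ)) ∈ M → le a b)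
    (hadd : ∀ a b k : M, le a b → le (a + k) (b + k)) :
    ∃ le' : (Fin d → ℚ) → (Fin d → ℚ) → Prop,
      (∀ x, le' x x) ∧
      (∀ x y z, le' x y → le' y z → le' x z) ∧
      (∀ x y, le' x y → le' y x → x = y) ∧
      (∀ x y, le' x y ∨ le' y x) ∧
      (∀ a b : M, (le' (fun i => ((a : Fin d → ℤ) i : ℚ)) (fun i => ((b : Fin d → ℤ) i : ℚ))
        ↔ le a b)) ∧
      (∀ x y p : Fin d → ℚ, le' x y → le' (x + p) (y + p)) ∧
      (∀ (x y : Fin d → ℚ) (c : ℚ), 0 < c → le' x y → le' (c • x) (c • y)) :=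
  monomial_order_extends_to_rat_vector_space_general d M hspan le htrans hantisymm htotal hadd
end

section
/- Let d, r ≥ 1, let w_1, …, w_r ∈ ℝ^d, and let Γ ⊂ ℝ^d be a finite set such that for every γ ∈ Γ there exists an index r₀ ∈ {1, …, r} with γ · w_i = 0 for all i < r₀ and γ · w_{r₀} > 0, where · denotes the standard inner product on ℝ^d. Then there exists ε₀ > 0 such that for every ε with 0 < ε < ε₀ and every γ ∈ Γ one has γ · (w_1 + ε w_2 + ε² w_3 + ⋯ + ε^{r−1} w_r) > 0. -/
/-!
Pairing `γ` with `w_1 + ε w_2 + ⋯ + ε^{r-1} w_r` gives the polynomial `∑ ε^j (γ · w_{j+1})` in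
`ε`, whose lowest nonzero coefficient is the positive number `γ · w_{r₀}`. Dividing by
`ε^{r₀-1}` leaves a continuous function of `ε` equal to `γ · w_{r₀} > 0` at `ε = 0`, so it stays
positive for small `ε > 0`; finiteness of `Γ` makes the threshold uniform.
-/

open Filter Topology Matrix

theorem sum_pow_mul_eq_pow_mul_sum_pow_sub {R : Type*} [CommSemiring R] {r : ℕ} {c : Fin r → R}
    {r₀ : Fin r} (hz : ∀ i < r₀, c i = 0) (ε : R) :
    ∑ j : Fin r, ε ^ (j : ℕ) * c j = ε ^ (r₀ : ℕ) * ∑ j : Fin r, ε ^ ((j : ℕ) - r₀) * c j := by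
  rw [Finset.mul_sum]
  refine Finset.sum_congr rfl fun j _ => ?_
  rcases lt_or_ge j r₀ with hj | hj
  · simp [hz j hj]
  · rw [← mul_assoc, ← pow_add, Nat.add_sub_cancel' (Fin.le_def.mp hj)]

theorem sum_zero_pow_sub_mul {R : Type*} [CommSemiring R] {r : ℕ} {c : Fin r → R} {r₀ : Fin r}
    (hz : ∀ i < r₀, c i = 0) :
    ∑ j : Fin r, (0 : R) ^ ((j : ℕ) - r₀) * c j = c r₀ := by
  rw [Finset.sum_eq_single r₀ (fun j _ hj => ?_) (by simp)]
  · simp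
  rcases hj.lt_or_gt with hj | hj
  · simp [hz j hj]
  · simp [zero_pow (Nat.sub_ne_zero_of_lt (Fin.lt_def.mp hj))]

theorem eventually_pos_sum_pow_mul {𝕜 : Type*} [Field 𝕜] [LinearOrder 𝕜] [IsStrictOrderedRing 𝕜]
    [TopologicalSpace 𝕜] [OrderTopology 𝕜] {r : ℕ} {c : Fin r → 𝕜} {r₀ : Fin r}
    (hz : ∀ i < r₀, c i = 0) (hpos : 0 < c r₀) :
    ∀ᶠ ε in 𝓝[>] (0 : 𝕜), 0 < ∑ j : Fin r, ε ^ (j : ℕ) * c j := by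
  have hcont : Continuous fun ε : 𝕜 => ∑ j : Fin r, ε ^ ((j : ℕ) - r₀) * c j := by fun_prop
  have hnear : ∀ᶠ ε in 𝓝 (0 : 𝕜), 0 < ∑ j : Fin r, ε ^ ((j : ℕ) - r₀) * c j :=
    (hcont.tendsto 0).eventually (eventually_gt_nhds (by simpa only [sum_zero_pow_sub_mul hz]))
  filter_upwards [nhdsWithin_le_nhds hnear, self_mem_nhdsWithin] with ε hε (hε0 : 0 < ε)
  rw [sum_pow_mul_eq_pow_mul_sum_pow_sub hz]
  exact mul_pos (pow_pos hε0 _) hε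

theorem lex_positive_perturbation_general
    (d r : ℕ)
    (w : Fin r → Fin d → ℝ) (Γ : Finset (Fin d → ℝ))
    (h : ∀ γ ∈ Γ, ∃ r₀ : Fin r,
      (∀ i : Fin r, i < r₀ → ∑ k, γ k * w i k = 0) ∧ 0 < ∑ k, γ k * w r₀ k) :
    ∃ ε₀ > (0 : ℝ), ∀ ε : ℝ, 0 < ε → ε < ε₀ → ∀ γ ∈ Γ,
      0 < ∑ k, γ k * (∑ j : Fin r, ε ^ (j : ℕ) * w j k) := by
  have hall : ∀ᶠ ε in 𝓝[>] (0 : ℝ), ∀ γ ∈ Γ, 0 < γ ⬝ᵥ ∑ j : Fin r, ε ^ (j : ℕ) • w j := by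
    refine (eventually_all_finset Γ).2 fun γ hγ => ?_
    obtain ⟨r₀, hz, hpos⟩ := h γ hγ
    simpa only [dotProduct_sum, dotProduct_smul, smul_eq_mul] using
      eventually_pos_sum_pow_mul (c := fun j => γ ⬝ᵥ w j) hz hpos
  obtain ⟨ε₀, hε₀, hsub⟩ := mem_nhdsGT_iff_exists_Ioo_subset.mp hall
  refine ⟨ε₀, hε₀, fun ε hε hε' γ hγ => ?_⟩
  simpa [dotProduct, Finset.sum_apply] using hsub ⟨hε, hε'⟩ γ hγ

/-- let `d, r ≥ 1`, `w_1, …, w_r ∈ ℝ^d`, and `Γ ⊂ ℝ^d` a finite set such that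
every `γ ∈ Γ` is lexicographically positive against the `w_i` (there is `r₀` with
`γ · w_i = 0` for `i < r₀` and `γ · w_{r₀} > 0`).  Then there is `ε₀ > 0` such that for
all `0 < ε < ε₀` and all `γ ∈ Γ`, `γ · (w_1 + ε w_2 + ⋯ + ε^{r−1} w_r) > 0`. -/
theorem lex_positive_perturbation
    (d r : ℕ) (hd : 1 ≤ d) (hr : 1 ≤ r)
    (w : Fin r → Fin d → ℝ) (Γ : Finset (Fin d → ℝ))
    (h : ∀ γ ∈ Γ, ∃ r₀ : Fin r,
      (∀ i : Fin r, i < r₀ → ∑ k, γ k * w i k = 0) ∧ 0 < ∑ k, γ k * w r₀ k) :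
    ∃ ε₀ > (0 : ℝ), ∀ ε : ℝ, 0 < ε → ε < ε₀ → ∀ γ ∈ Γ,
      0 < ∑ k, γ k * (∑ j : Fin r, ε ^ (j : ℕ) * w j k) :=
  lex_positive_perturbation_general d r w Γ h
end

section
/- For every integer n ≥ 1: if n is odd then P_n ∩ P_{n+1} = {p_n}, and if n is even then P_n ∩ P_{n+1} = {s_n}; moreover P_{n+1} is the disjoint union of the translate (1,1) + (P_n \ P_{n+1}) and the two-element set {p_{n+1}, s_{n+1}}. -/
/-!
Writing `n = 2m` or `n = 2m + 1` turns `P_n` into explicit lattice points: `p_n`, `s_n`, the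
points `q^i` of the line `b = 2a - n - 2` and the points `r^j` of the line `b = 2a - n - 1`, the two
runs meeting at `a = n + 1`. Translation by `(1, 1)` sends `q^i` of `P_n` to `q^i` of `P_{n+1}`
and `r^j` to `r^j`. For odd `n` we have `p_n = p_{n+1}`, and `(1, 1) + s_n` is the new last point
`r^{(n+1)/2}` of `P_{n+1}`; for even `n` we have `s_n = s_{n+1}`, and `(1, 1) + p_n` is the new last
point `q^{n/2}`. Once `P_n` is described by linear equations and inequalities, every claim is
linear integer arithmetic.
-/

open Pointwise

/-- The submonoid `σ_Z ⊂ ℤ²` of pairs `(a,b)` with `0 ≤ b` and `3b ≤ 4a`. -/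
def sigmaZ : Set (ℤ × ℤ) := {a : ℤ × ℤ | 0 ≤ a.2 ∧ 3 * a.2 ≤ 4 * a.1}

/-- The point `p_n`. -/
def pPt (n : ℤ) : ℤ × ℤ := if Odd n then ((n + 3) / 2, 0) else (n / 2 + 1, 0)

/-- The point `s_n`. -/
def sPt (n : ℤ) : ℤ × ℤ :=
  if Odd n then (3 * (n + 1) / 2, 2 * (n + 1)) else (3 * (n + 2) / 2, 2 * (n + 2))

/-- The point `q^i = (n+1-i, n-2i)`. -/
def qPt (n i : ℤ) : ℤ × ℤ := (n + 1 - i, n - 2 * i)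

/-- The point `r^j = (n+1+j, n+1+2j)`. -/
def rPt (n j : ℤ) : ℤ × ℤ := (n + 1 + j, n + 1 + 2 * j)

/-- The set `P_n ⊂ ℤ²`. -/
def Pset (n : ℤ) : Set (ℤ × ℤ) :=
  {pPt n, sPt n}
    ∪ {x | ∃ i : ℤ, 0 ≤ i ∧ i ≤ (if Odd n then (n - 1) / 2 else (n - 2) / 2) ∧ x = qPt n i}
    ∪ {x | ∃ j : ℤ, 0 ≤ j ∧ j ≤ (if Odd n then (n - 1) / 2 else n / 2) ∧ x = rPt n j}

/-- The set `D_n = σ_Z \ (P_n + σ_Z)`, where `+` is pointwise addition of sets. -/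
def Dset (n : ℤ) : Set (ℤ × ℤ) := sigmaZ \ (Pset n + sigmaZ)

theorem pPt_two_mul (m : ℤ) : pPt (2 * m) = (m + 1, 0) := by
  rw [pPt, if_neg (Int.not_odd_iff_even.2 (even_two_mul m))]; congr 1; omega

theorem pPt_two_mul_add_one (m : ℤ) : pPt (2 * m + 1) = (m + 2, 0) := by
  rw [pPt, if_pos (odd_two_mul_add_one m)]; congr 1; omega

theorem sPt_two_mul (m : ℤ) : sPt (2 * m) = (3 * m + 3, 4 * m + 4) := by
  rw [sPt, if_neg (Int.not_odd_iff_even.2 (even_two_mul m))]; congr 1 <;> omega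

theorem sPt_two_mul_add_one (m : ℤ) : sPt (2 * m + 1) = (3 * m + 3, 4 * m + 4) := by
  rw [sPt, if_pos (odd_two_mul_add_one m)]; congr 1 <;> omega

theorem mem_Pset_two_mul {m a b : ℤ} :
    (a, b) ∈ Pset (2 * m) ↔ (a = m + 1 ∧ b = 0) ∨ (a = 3 * m + 3 ∧ b = 4 * m + 4) ∨
      (b = 2 * a - 2 * m - 2 ∧ m + 2 ≤ a ∧ a ≤ 2 * m + 1) ∨
      (b = 2 * a - 2 * m - 1 ∧ 2 * m + 1 ≤ a ∧ a ≤ 3 * m + 1) := by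
  simp only [Pset, pPt_two_mul, sPt_two_mul, qPt, rPt,
    if_neg (Int.not_odd_iff_even.2 (even_two_mul m)), Set.mem_union, Set.mem_insert_iff,
    Set.mem_singleton_iff, Set.mem_ofPred_eq, Prod.mk.injEq]
  constructor
  · rintro (((h | h) | ⟨i, h⟩) | ⟨j, h⟩) <;> omega
  · rintro (h | h | h | h)
    · exact Or.inl (Or.inl (Or.inl h))
    · exact Or.inl (Or.inl (Or.inr h))
    · exact Or.inl (Or.inr ⟨2 * m + 1 - a, by omega⟩)
    · exact Or.inr ⟨a - 2 * m - 1, by omega⟩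

theorem mem_Pset_two_mul_add_one {m a b : ℤ} :
    (a, b) ∈ Pset (2 * m + 1) ↔ (a = m + 2 ∧ b = 0) ∨ (a = 3 * m + 3 ∧ b = 4 * m + 4) ∨
      (b = 2 * a - 2 * m - 3 ∧ m + 2 ≤ a ∧ a ≤ 2 * m + 2) ∨
      (b = 2 * a - 2 * m - 2 ∧ 2 * m + 2 ≤ a ∧ a ≤ 3 * m + 2) := by
  simp only [Pset, pPt_two_mul_add_one, sPt_two_mul_add_one, qPt, rPt,
    if_pos (odd_two_mul_add_one m), Set.mem_union, Set.mem_insert_iff, Set.mem_singleton_iff,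
    Set.mem_ofPred_eq, Prod.mk.injEq]
  constructor
  · rintro (((h | h) | ⟨i, h⟩) | ⟨j, h⟩) <;> omega
  · rintro (h | h | h | h)
    · exact Or.inl (Or.inl (Or.inl h))
    · exact Or.inl (Or.inl (Or.inr h))
    · exact Or.inl (Or.inr ⟨2 * m + 2 - a, by omega⟩)
    · exact Or.inr ⟨a - 2 * m - 2, by omega⟩

theorem mem_image_add_left_iff {G : Type*} [AddCommGroup G] {x v : G} {S : Set G} :
    x ∈ (fun y => v + y) '' S ↔ x - v ∈ S := by
  rw [Set.image_add_left, Set.mem_preimage, neg_add_eq_sub]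

theorem Pset_inter_Pset_add_one_of_even {n : ℤ} (hn : Even n) :
    Pset n ∩ Pset (n + 1) = {sPt n} := by
  obtain ⟨m, rfl⟩ := even_iff_two_dvd.1 hn
  ext ⟨a, b⟩
  simp only [Set.mem_inter_iff, mem_Pset_two_mul, mem_Pset_two_mul_add_one, sPt_two_mul,
    Set.mem_singleton_iff, Prod.mk.injEq]
  omega

theorem Pset_inter_Pset_add_one_of_odd {n : ℤ} (hn : Odd n) :
    Pset n ∩ Pset (n + 1) = {pPt n} := by
  obtain ⟨m, rfl⟩ := hn
  rw [show 2 * m + 1 + 1 = 2 * (m + 1) by ring]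
  ext ⟨a, b⟩
  simp only [Set.mem_inter_iff, mem_Pset_two_mul, mem_Pset_two_mul_add_one, pPt_two_mul_add_one,
    Set.mem_singleton_iff, Prod.mk.injEq]
  omega

theorem Pset_add_one_eq_union {n : ℤ} (hn : 0 ≤ n) :
    Pset (n + 1) = (fun x => ((1, 1) : ℤ × ℤ) + x) '' (Pset n \ Pset (n + 1))
      ∪ {pPt (n + 1), sPt (n + 1)} := by
  obtain ⟨m, rfl | rfl⟩ := Int.even_or_odd' n
  · ext ⟨a, b⟩
    simp only [mem_Pset_two_mul, mem_Pset_two_mul_add_one, pPt_two_mul_add_one,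
      sPt_two_mul_add_one, Set.mem_union, mem_image_add_left_iff, Prod.mk_sub_mk, Set.mem_sdiff,
      Set.mem_insert_iff, Set.mem_singleton_iff, Prod.mk.injEq]
    constructor
    · rintro (h | h | h | h) <;> omega
    · rintro (⟨h | h | h | h, hne⟩ | h | h) <;> omega
  · rw [show 2 * m + 1 + 1 = 2 * (m + 1) by ring]
    ext ⟨a, b⟩
    simp only [mem_Pset_two_mul, mem_Pset_two_mul_add_one, pPt_two_mul, sPt_two_mul,
      Set.mem_union, mem_image_add_left_iff, Prod.mk_sub_mk, Set.mem_sdiff, Set.mem_insert_iff,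
      Set.mem_singleton_iff, Prod.mk.injEq]
    constructor
    · rintro (h | h | h | h) <;> omega
    · rintro (⟨h | h | h | h, hne⟩ | h | h) <;> omega

theorem disjoint_image_add_Pset_sdiff (n : ℤ) :
    Disjoint ((fun x => ((1, 1) : ℤ × ℤ) + x) '' (Pset n \ Pset (n + 1)))
      {pPt (n + 1), sPt (n + 1)} := by
  rw [Set.disjoint_left]
  rintro ⟨a, b⟩
  obtain ⟨m, rfl | rfl⟩ := Int.even_or_odd' n
  · simp only [mem_Pset_two_mul, mem_Pset_two_mul_add_one, pPt_two_mul_add_one,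
      sPt_two_mul_add_one, mem_image_add_left_iff, Prod.mk_sub_mk, Set.mem_sdiff,
      Set.mem_insert_iff, Set.mem_singleton_iff, Prod.mk.injEq]
    omega
  · rw [show 2 * m + 1 + 1 = 2 * (m + 1) by ring]
    simp only [mem_Pset_two_mul, mem_Pset_two_mul_add_one, pPt_two_mul, sPt_two_mul,
      mem_image_add_left_iff, Prod.mk_sub_mk, Set.mem_sdiff, Set.mem_insert_iff,
      Set.mem_singleton_iff, Prod.mk.injEq]
    omega

theorem Pset_succ_structure_general (n : ℕ) :
    (Odd n → Pset (n : ℤ) ∩ Pset ((n : ℤ) + 1) = {pPt (n : ℤ)}) ∧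
    (Even n → Pset (n : ℤ) ∩ Pset ((n : ℤ) + 1) = {sPt (n : ℤ)}) ∧
    Pset ((n : ℤ) + 1) =
      ((fun x => ((1, 1) : ℤ × ℤ) + x) '' (Pset (n : ℤ) \ Pset ((n : ℤ) + 1)))
        ∪ {pPt ((n : ℤ) + 1), sPt ((n : ℤ) + 1)} ∧
    Disjoint ((fun x => ((1, 1) : ℤ × ℤ) + x) '' (Pset (n : ℤ) \ Pset ((n : ℤ) + 1)))
      {pPt ((n : ℤ) + 1), sPt ((n : ℤ) + 1)} :=
  ⟨fun h => Pset_inter_Pset_add_one_of_odd ((Int.odd_coe_nat n).2 h),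
    fun h => Pset_inter_Pset_add_one_of_even ((Int.even_coe_nat n).2 h),
    Pset_add_one_eq_union n.cast_nonneg, disjoint_image_add_Pset_sdiff n⟩

/-- for every integer `n ≥ 1`: if `n` is odd then `P_n ∩ P_{n+1} = {p_n}`,
if `n` is even then `P_n ∩ P_{n+1} = {s_n}`; moreover `P_{n+1}` is the disjoint union of
`(1,1) + (P_n \ P_{n+1})` and `{p_{n+1}, s_{n+1}}`. -/
theorem Pset_succ_structure (n : ℕ) (hn : 1 ≤ n) :
    (Odd n → Pset (n : ℤ) ∩ Pset ((n : ℤ) + 1) = {pPt (n : ℤ)}) ∧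
    (Even n → Pset (n : ℤ) ∩ Pset ((n : ℤ) + 1) = {sPt (n : ℤ)}) ∧
    Pset ((n : ℤ) + 1) =
      ((fun x => ((1, 1) : ℤ × ℤ) + x) '' (Pset (n : ℤ) \ Pset ((n : ℤ) + 1)))
        ∪ {pPt ((n : ℤ) + 1), sPt ((n : ℤ) + 1)} ∧
    Disjoint ((fun x => ((1, 1) : ℤ × ℤ) + x) '' (Pset (n : ℤ) \ Pset ((n : ℤ) + 1)))
      {pPt ((n : ℤ) + 1), sPt ((n : ℤ) + 1)} :=
  Pset_succ_structure_general n
end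

section
/- For every integer n ≥ 1, the set P_n + σ_Z is the disjoint union of P_n \ P_{n+1} and P_{n+1} + σ_Z; that is, P_n + σ_Z = (P_n \ P_{n+1}) ⊔ (P_{n+1} + σ_Z). -/
open Pointwise

/-! The quantities `b`, `2a - b` and `4a - 3b` are monotone along `σ_Z`. The points of `P_n` are
`p_n` on `b = 0`, the `q^i` on the line `2a - b = n + 2`, the `r^j` on `2a - b = n + 1`, and `s_n`;
so `P_n + σ_Z` is the staircase
`{0 ≤ b ≤ n, 2a - b ≥ n + 2} ∪ {b ≥ n + 1, 2a - b ≥ n + 1, 4a - 3b ≥ 1} ∪ (s_n + σ_Z)`.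
With `P_n` and `P_n + σ_Z` both given by linear conditions, the decomposition becomes a statement
of Presburger arithmetic in `n, a, b`. -/

theorem Set.mem_add_iff_exists_sub_mem {G : Type*} [AddCommGroup G] {s t : Set G} {x : G} :
    x ∈ s + t ↔ ∃ p ∈ s, x - p ∈ t := by
  simp only [Set.mem_add]
  constructor
  · rintro ⟨p, hp, y, hy, rfl⟩
    exact ⟨p, hp, by simpa using hy⟩
  · rintro ⟨p, hp, hx⟩
    exact ⟨p, hp, x - p, hx, add_sub_cancel p x⟩

lemma pPt_eq (n : ℤ) : pPt n = ((n + 3) / 2, 0) := by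
  simp only [pPt, Int.odd_iff]
  split_ifs
  · rfl
  · simp only [Prod.mk.injEq, and_true]
    omega

lemma sPt_eq (n : ℤ) : sPt n = (3 * ((n + 2) / 2), 4 * ((n + 2) / 2)) := by
  simp only [sPt, Int.odd_iff]
  split_ifs <;> simp only [Prod.mk.injEq] <;> omega

lemma mem_Pset_iff (n a b : ℤ) :
    (a, b) ∈ Pset n ↔
      (a = (n + 3) / 2 ∧ b = 0) ∨ (a = 3 * ((n + 2) / 2) ∧ b = 4 * ((n + 2) / 2)) ∨
      (2 * a - b = n + 2 ∧ 1 ≤ b ∧ b ≤ n) ∨ (2 * a - b = n + 1 ∧ n + 1 ≤ b ∧ b ≤ 2 * n + 1) := by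
  have hq : (if Odd n then (n - 1) / 2 else (n - 2) / 2) = (n - 1) / 2 := by
    simp only [Int.odd_iff]
    split_ifs <;> omega
  have hr : (if Odd n then (n - 1) / 2 else n / 2) = n / 2 := by
    simp only [Int.odd_iff]
    split_ifs <;> omega
  simp only [Pset, hq, hr, pPt_eq, sPt_eq, qPt, rPt, Set.mem_union, Set.mem_insert_iff,
    Set.mem_singleton_iff, Set.mem_ofPred_eq, Prod.mk.injEq]
  constructor
  · rintro (((h | h) | ⟨i, h⟩) | ⟨j, h⟩) <;> omega
  · rintro (h | h | h | h)
    · exact Or.inl (Or.inl (Or.inl h))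
    · exact Or.inl (Or.inl (Or.inr h))
    · exact Or.inl (Or.inr ⟨(n - b) / 2, by omega⟩)
    · exact Or.inr ⟨(b - n - 1) / 2, by omega⟩

lemma mem_Pset_add_sigmaZ_iff {n : ℤ} (hn : 0 ≤ n) (a b : ℤ) :
    (a, b) ∈ Pset n + sigmaZ ↔
      (0 ≤ b ∧ b ≤ n ∧ n + 2 ≤ 2 * a - b) ∨ (n + 1 ≤ b ∧ n + 1 ≤ 2 * a - b ∧ 1 ≤ 4 * a - 3 * b) ∨
      (4 * ((n + 2) / 2) ≤ b ∧ 0 ≤ 4 * a - 3 * b) := by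
  simp only [Set.mem_add_iff_exists_sub_mem, Prod.exists, sigmaZ, Set.mem_ofPred_eq,
    Prod.mk_sub_mk]
  constructor
  · rintro ⟨c, d, hP, hσ⟩
    rw [mem_Pset_iff] at hP
    omega
  have dominated : ∀ c d, (c, d) ∈ Pset n → d ≤ b → 3 * (b - d) ≤ 4 * (a - c) →
      ∃ c d, (c, d) ∈ Pset n ∧ 0 ≤ b - d ∧ 3 * (b - d) ≤ 4 * (a - c) :=
    fun c d hP h₁ h₂ => ⟨c, d, hP, by omega, h₂⟩
  -- The witness is `p_n`, `s_n`, or the point of `P_n` on the relevant line with largest `d ≤ b`.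
  rintro (⟨hb₀, hbn, h⟩ | ⟨hb, h, hl⟩ | ⟨hb, hl⟩)
  · obtain ⟨k, hk⟩ : ∃ k, b - n = 2 * k ∨ b - n = 2 * k + 1 := Int.even_or_odd' _
    obtain hq | hp := le_or_gt 1 (n + 2 * k)
    · exact dominated (n + 1 + k) (n + 2 * k) ((mem_Pset_iff _ _ _).2 (by omega)) (by omega)
        (by omega)
    · exact dominated ((n + 3) / 2) 0 ((mem_Pset_iff _ _ _).2 (by omega)) (by omega) (by omega)
  · obtain hs | hs := le_or_gt (4 * ((n + 2) / 2)) b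
    · exact dominated (3 * ((n + 2) / 2)) (4 * ((n + 2) / 2))
        ((mem_Pset_iff _ _ _).2 (by omega)) hs (by omega)
    obtain ⟨k, hk⟩ : ∃ k, b - n - 1 = 2 * k ∨ b - n - 1 = 2 * k + 1 := Int.even_or_odd' _
    obtain hr | hr := le_or_gt (2 * k) n
    · exact dominated (n + 1 + k) (n + 1 + 2 * k) ((mem_Pset_iff _ _ _).2 (by omega)) (by omega)
        (by omega)
    · exact dominated (n + 1 + n / 2) (n + 1 + 2 * (n / 2)) ((mem_Pset_iff _ _ _).2 (by omega))
        (by omega) (by omega)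
  · exact dominated (3 * ((n + 2) / 2)) (4 * ((n + 2) / 2)) ((mem_Pset_iff _ _ _).2 (by omega))
      hb (by omega)

theorem Pset_add_sigmaZ_succ_general (n : ℕ) :
    Pset (n : ℤ) + sigmaZ =
      (Pset (n : ℤ) \ Pset ((n : ℤ) + 1)) ∪ (Pset ((n : ℤ) + 1) + sigmaZ) ∧
    Disjoint (Pset (n : ℤ) \ Pset ((n : ℤ) + 1)) (Pset ((n : ℤ) + 1) + sigmaZ) := by
  have hn : (0 : ℤ) ≤ n := n.cast_nonneg
  have hn' : (0 : ℤ) ≤ n + 1 := by omega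
  constructor
  · ext ⟨a, b⟩
    simp only [Set.mem_union, Set.mem_sdiff, mem_Pset_iff, mem_Pset_add_sigmaZ_iff hn,
      mem_Pset_add_sigmaZ_iff hn']
    omega
  · rw [Set.disjoint_left]
    rintro ⟨a, b⟩ ⟨hP, hP'⟩ hσ
    rw [mem_Pset_iff] at hP hP'
    rw [mem_Pset_add_sigmaZ_iff hn'] at hσ
    omega

/-- for every integer `n ≥ 1`,
`P_n + σ_Z` is the disjoint union of `P_n \ P_{n+1}` and `P_{n+1} + σ_Z`. -/
theorem Pset_add_sigmaZ_succ (n : ℕ) (hn : 1 ≤ n) :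
    Pset (n : ℤ) + sigmaZ =
      (Pset (n : ℤ) \ Pset ((n : ℤ) + 1)) ∪ (Pset ((n : ℤ) + 1) + sigmaZ) ∧
    Disjoint (Pset (n : ℤ) \ Pset ((n : ℤ) + 1)) (Pset ((n : ℤ) + 1) + sigmaZ) :=
  Pset_add_sigmaZ_succ_general n
end

section
/- Let Φ: ℤ² → ℤ be the map (a,b) ↦ b − a. For every integer n ≥ 1: if n is odd then Φ(D_n) = {k ∈ ℤ : −(n+1)/2 ≤ k ≤ (n+1)/2 − 1}; if n is even then Φ(D_n) = {k ∈ ℤ : −n/2 ≤ k ≤ n/2}, and moreover the point (3n/2, 2n) is the unique element of D_n whose image under Φ equals n/2. -/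
open Pointwise

/-!
Since `σ_Z` is cut out by the functionals `b` and `4a - 3b`, a point lies in `P + σ_Z` iff it
dominates some point of `P` in both. On the line `b - a = k` one has `4a - 3b = b - 4k`, so
`p_n = (c, 0)` covers every point of `σ_Z` with `k ≤ -c` and `s_n = (3m, 4m)` every point with
`k ≥ m`, where `c = ⌊(n+1)/2⌋ + 1` and `m = ⌊n/2⌋ + 1` for either parity; the points `(3k, 4k)`
for `0 ≤ k < m` and `(-k, 0)` for `-c < k < 0` escape `P_n + σ_Z`. For even `n = 2k`, the point
`r^k = (3k + 1, 4k + 1)` covers everything on the line `b - a = k` except `(3k, 4k)`.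
-/

lemma mem_add_sigmaZ {P : Set (ℤ × ℤ)} {x : ℤ × ℤ} :
    x ∈ P + sigmaZ ↔ ∃ p ∈ P, p.2 ≤ x.2 ∧ 4 * p.1 - 3 * p.2 ≤ 4 * x.1 - 3 * x.2 := by
  constructor
  · rintro ⟨p, hp, s, ⟨hs₁, hs₂⟩, rfl⟩
    exact ⟨p, hp, by simp only [Prod.snd_add]; omega,
      by simp only [Prod.fst_add, Prod.snd_add]; omega⟩
  · rintro ⟨p, hp, h₁, h₂⟩
    exact ⟨p, hp, x - p, ⟨by simp only [Prod.snd_sub]; omega,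
      by simp only [Prod.fst_sub, Prod.snd_sub]; omega⟩, add_sub_cancel p x⟩

section Staircase

variable {P : Set (ℤ × ℤ)} {c m k : ℤ} {x : ℤ × ℤ}

lemma neg_lt_sub_of_mem_diff (hp : (c, 0) ∈ P) (hx : x ∈ sigmaZ \ (P + sigmaZ)) :
    -c < x.2 - x.1 := by
  obtain ⟨⟨hx₂, hx₁⟩, hx⟩ := hx
  by_contra! h
  exact hx (mem_add_sigmaZ.2 ⟨(c, 0), hp, hx₂, by simp only; omega⟩)

lemma sub_lt_of_mem_diff (hs : (3 * m, 4 * m) ∈ P) (hx : x ∈ sigmaZ \ (P + sigmaZ)) :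
    x.2 - x.1 < m := by
  obtain ⟨⟨hx₂, hx₁⟩, hx⟩ := hx
  by_contra! h
  exact hx (mem_add_sigmaZ.2 ⟨(3 * m, 4 * m), hs, by simp only; omega, by simp only; omega⟩)

lemma diag_mem_diff (hray : ∀ p ∈ P, 4 * p.1 - 3 * p.2 ≤ 0 → 4 * m ≤ p.2) (hk₀ : 0 ≤ k)
    (hkm : k < m) : (3 * k, 4 * k) ∈ sigmaZ \ (P + sigmaZ) := by
  refine ⟨⟨by simp only; omega, by simp only; omega⟩, fun h ↦ ?_⟩
  obtain ⟨p, hp, h₂, h₁⟩ := mem_add_sigmaZ.1 h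
  have := hray p hp (by simp only at h₁; omega)
  simp only at h₂
  omega

lemma axis_mem_diff (haxis : ∀ p ∈ P, p.2 ≤ 0 → c ≤ p.1) (hck : -c < k) (hk₀ : k < 0) :
    (-k, 0) ∈ sigmaZ \ (P + sigmaZ) := by
  refine ⟨⟨le_rfl, by simp only; omega⟩, fun h ↦ ?_⟩
  obtain ⟨p, hp, h₂, h₁⟩ := mem_add_sigmaZ.1 h
  have := haxis p hp h₂
  simp only at h₁
  omega

theorem image_sub_diff_eq_Icc (hp : (c, 0) ∈ P) (hs : (3 * m, 4 * m) ∈ P)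
    (haxis : ∀ p ∈ P, p.2 ≤ 0 → c ≤ p.1)
    (hray : ∀ p ∈ P, 4 * p.1 - 3 * p.2 ≤ 0 → 4 * m ≤ p.2) :
    (fun a : ℤ × ℤ ↦ a.2 - a.1) '' (sigmaZ \ (P + sigmaZ)) = Set.Icc (1 - c) (m - 1) := by
  ext k
  constructor
  · rintro ⟨x, hx, rfl⟩
    have := neg_lt_sub_of_mem_diff hp hx
    have := sub_lt_of_mem_diff hs hx
    constructor <;> dsimp only <;> omega
  · rintro ⟨hck, hkm⟩
    rcases le_or_gt 0 k with hk₀ | hk₀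
    · exact ⟨_, diag_mem_diff hray hk₀ (by omega), by simp only; ring⟩
    · exact ⟨_, axis_mem_diff haxis (by omega) hk₀, by simp only; ring⟩

lemma eq_diag_of_mem_diff (hr : (3 * k + 1, 4 * k + 1) ∈ P) (hx : x ∈ sigmaZ \ (P + sigmaZ))
    (hxk : x.2 - x.1 = k) : x = (3 * k, 4 * k) := by
  obtain ⟨⟨hx₂, hx₁⟩, hx⟩ := hx
  have hb : x.2 ≤ 4 * k := by
    by_contra! h
    exact hx (mem_add_sigmaZ.2 ⟨_, hr, by simp only; omega, by simp only; omega⟩)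
  ext <;> simp only <;> omega

end Staircase

-- With floor division, `p_n`, `s_n` and both index bounds take one form for either parity.
lemma mem_Pset {n : ℤ} {p : ℤ × ℤ} :
    p ∈ Pset n ↔ p = ((n + 1) / 2 + 1, 0) ∨ p = (3 * (n / 2 + 1), 4 * (n / 2 + 1)) ∨
      (∃ i, 0 ≤ i ∧ i ≤ (n - 1) / 2 ∧ p = qPt n i) ∨
      (∃ j, 0 ≤ j ∧ j ≤ n / 2 ∧ p = rPt n j) := by
  simp only [Pset, pPt, sPt, Set.mem_union, Set.mem_insert_iff, Set.mem_singleton_iff,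
    Set.mem_ofPred_eq, or_assoc]
  rcases Int.even_or_odd' n with ⟨t, rfl | rfl⟩
  · have h : ¬ Odd (2 * t) := by simp [Int.not_odd_iff_even]
    simp only [if_neg h, show (2 * t + 1) / 2 = t by omega, show 2 * t / 2 = t by omega,
      show (2 * t - 1) / 2 = t - 1 by omega, show (2 * t - 2) / 2 = t - 1 by omega,
      show 3 * (2 * t + 2) / 2 = 3 * (t + 1) by omega, show 2 * (2 * t + 2) = 4 * (t + 1) by ring]
  · have h : Odd (2 * t + 1) := odd_two_mul_add_one t
    simp only [if_pos h, show (2 * t + 1 + 3) / 2 = (2 * t + 1 + 1) / 2 + 1 by omega,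
      show (2 * t + 1) / 2 = t by omega, show (2 * t + 1 - 1) / 2 = t by omega,
      show 3 * (2 * t + 1 + 1) / 2 = 3 * (t + 1) by omega,
      show 2 * (2 * t + 1 + 1) = 4 * (t + 1) by ring]

section Pset

variable {n : ℤ} {p : ℤ × ℤ}

lemma le_fst_of_mem_Pset (hn : 0 ≤ n) (hp : p ∈ Pset n) (h : p.2 ≤ 0) : (n + 1) / 2 + 1 ≤ p.1 := by
  rcases mem_Pset.1 hp with rfl | rfl | ⟨i, hi₀, hi, rfl⟩ | ⟨j, hj₀, hj, rfl⟩ <;>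
    simp only [qPt, rPt] at h ⊢ <;> omega

lemma le_snd_of_mem_Pset (hn : 0 ≤ n) (hp : p ∈ Pset n) (h : 4 * p.1 - 3 * p.2 ≤ 0) :
    4 * (n / 2 + 1) ≤ p.2 := by
  rcases mem_Pset.1 hp with rfl | rfl | ⟨i, hi₀, hi, rfl⟩ | ⟨j, hj₀, hj, rfl⟩ <;>
    simp only [qPt, rPt] at h ⊢ <;> omega

theorem image_sub_Dset (hn : 0 ≤ n) :
    (fun a : ℤ × ℤ ↦ a.2 - a.1) '' Dset n = Set.Icc (-((n + 1) / 2)) (n / 2) := by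
  rw [Dset, image_sub_diff_eq_Icc (mem_Pset.2 (Or.inl rfl)) (mem_Pset.2 (Or.inr (Or.inl rfl)))
    (fun _ ↦ le_fst_of_mem_Pset hn) (fun _ ↦ le_snd_of_mem_Pset hn)]
  congr 1 <;> omega

lemma rPt_half_mem_Pset (hn : 0 ≤ n) (he : Even n) :
    (3 * (n / 2) + 1, 4 * (n / 2) + 1) ∈ Pset n := by
  refine mem_Pset.2 (Or.inr (Or.inr (Or.inr ⟨n / 2, by omega, le_rfl, ?_⟩)))
  obtain ⟨t, rfl⟩ := he
  ext <;> simp only [rPt] <;> omega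

end Pset

theorem Phi_image_Dset_general (n : ℕ) :
    (Odd n →
      (fun a : ℤ × ℤ => a.2 - a.1) '' Dset (n : ℤ) =
        Set.Icc (-(((n : ℤ) + 1) / 2)) (((n : ℤ) + 1) / 2 - 1)) ∧
    (Even n →
      (fun a : ℤ × ℤ => a.2 - a.1) '' Dset (n : ℤ) =
        Set.Icc (-((n : ℤ) / 2)) ((n : ℤ) / 2) ∧
      (3 * (n : ℤ) / 2, 2 * (n : ℤ)) ∈ Dset (n : ℤ) ∧
      2 * (n : ℤ) - 3 * (n : ℤ) / 2 = (n : ℤ) / 2 ∧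
      ∀ a ∈ Dset (n : ℤ), a.2 - a.1 = (n : ℤ) / 2 → a = (3 * (n : ℤ) / 2, 2 * (n : ℤ))) := by
  have hn₀ : (0 : ℤ) ≤ n := Int.natCast_nonneg n
  refine ⟨fun hodd ↦ ?_, fun heven ↦ ?_⟩
  · obtain ⟨t, ht⟩ := hodd
    rw [image_sub_Dset hn₀]
    congr 1; omega
  · obtain ⟨t, ht⟩ := heven
    have hdiag : (3 * (n : ℤ) / 2, 2 * (n : ℤ)) = (3 * ((n : ℤ) / 2), 4 * ((n : ℤ) / 2)) := by
      ext <;> simp only <;> omega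
    refine ⟨by rw [image_sub_Dset hn₀]; congr 1; omega, ?_, by omega, fun a ha hak ↦ ?_⟩
    · rw [hdiag]
      exact diag_mem_diff (fun _ ↦ le_snd_of_mem_Pset hn₀) (by omega) (by omega)
    · rw [hdiag]
      exact eq_diag_of_mem_diff (rPt_half_mem_Pset hn₀ ⟨t, by omega⟩) ha hak

/-- let `Φ : ℤ² → ℤ`, `(a,b) ↦ b − a`.  For every integer `n ≥ 1`:
if `n` is odd then `Φ(D_n) = {k : −(n+1)/2 ≤ k ≤ (n+1)/2 − 1}`;
if `n` is even then `Φ(D_n) = {k : −n/2 ≤ k ≤ n/2}` and `(3n/2, 2n)` is the unique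
element of `D_n` whose image under `Φ` is `n/2`. -/
theorem Phi_image_Dset (n : ℕ) (hn : 1 ≤ n) :
    (Odd n →
      (fun a : ℤ × ℤ => a.2 - a.1) '' Dset (n : ℤ) =
        Set.Icc (-(((n : ℤ) + 1) / 2)) (((n : ℤ) + 1) / 2 - 1)) ∧
    (Even n →
      (fun a : ℤ × ℤ => a.2 - a.1) '' Dset (n : ℤ) =
        Set.Icc (-((n : ℤ) / 2)) ((n : ℤ) / 2) ∧
      (3 * (n : ℤ) / 2, 2 * (n : ℤ)) ∈ Dset (n : ℤ) ∧
      2 * (n : ℤ) - 3 * (n : ℤ) / 2 = (n : ℤ) / 2 ∧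
      ∀ a ∈ Dset (n : ℤ), a.2 - a.1 = (n : ℤ) / 2 → a = (3 * (n : ℤ) / 2, 2 * (n : ℤ))) :=
  Phi_image_Dset_general n
end

section
/- For every integer n ≥ 2, let l_n := (2n−2, 2−n) if n is odd and l_n := (2n, 1−n) if n is even, and let V_n := (n−1)(n+2)+1 if n is odd and V_n := n(n+2) if n is even. Then l_n · a ≤ V_n for every a ∈ D_n, with equality attained at the point ((3n−1)/2, 2n−1) if n is odd and at (3n/2, 2n) if n is even; and l_n · a ≥ V_n for every a ∈ P_n, with equality attained at the point ((n+3)/2, 1) if n is odd and at (n/2+1, 0) if n is even. In particular the maximum of l_n · a over D_n equals the minimum of l_n · a over P_n, and both equal V_n. -/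
open Pointwise

/-- The vector `l_n`: `(2n−2, 2−n)` for odd `n`, `(2n, 1−n)` for even `n`. -/
def lVec (n : ℤ) : ℤ × ℤ := if Odd n then (2 * n - 2, 2 - n) else (2 * n, 1 - n)

/-- The value `V_n`: `(n−1)(n+2)+1` for odd `n`, `n(n+2)` for even `n`. -/
def Vval (n : ℤ) : ℤ := if Odd n then (n - 1) * (n + 2) + 1 else n * (n + 2)

/-- The standard inner product on `ℤ²`. -/
def dotZ (x y : ℤ × ℤ) : ℤ := x.1 * y.1 + x.2 * y.2

lemma mem_P_p (n : ℤ) : pPt n ∈ Pset n := Or.inl (Or.inl (Or.inl rfl))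
lemma mem_P_s (n : ℤ) : sPt n ∈ Pset n := Or.inl (Or.inl (Or.inr rfl))
lemma mem_P_q (n i : ℤ) (h0 : 0 ≤ i) (h1 : i ≤ if Odd n then (n - 1) / 2 else (n - 2) / 2) :
    qPt n i ∈ Pset n := Or.inl (Or.inr ⟨i, h0, h1, rfl⟩)
lemma mem_P_r (n j : ℤ) (h0 : 0 ≤ j) (h1 : j ≤ if Odd n then (n - 1) / 2 else n / 2) :
    rPt n j ∈ Pset n := Or.inr ⟨j, h0, h1, rfl⟩

lemma mem_P_add {n x y p1 p2 : ℤ} (hp : ((p1,p2) : ℤ×ℤ) ∈ Pset n)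
    (h1 : p2 ≤ y) (h2 : 4*p1 - 3*p2 ≤ 4*x - 3*y) : ((x,y) : ℤ×ℤ) ∈ Pset n + sigmaZ := by
  have he : ((x,y) : ℤ×ℤ) = (p1,p2) + (x - p1, y - p2) := by
    simp only [Prod.mk_add_mk, Prod.mk.injEq]; constructor <;> ring
  rw [he]
  exact Set.add_mem_add hp ⟨by simpa using h1, by simp; linarith⟩

lemma cover_odd (k u y : ℤ) (hk : 1 ≤ k) (hy : 0 ≤ y) (hu : 0 ≤ u)
    (hcong : (4:ℤ) ∣ u - y)
    (hbig : 8*k^2+12*k+4 ≤ 2*k*u + (2*k+2)*y) :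
    ∃ p1 p2 : ℤ, ((p1,p2) : ℤ×ℤ) ∈ Pset (2*k+1) ∧ p2 ≤ y ∧ 4*p1-3*p2 ≤ u := by
  have hodd : Odd (2*k+1) := ⟨k, by ring⟩
  rcases le_or_gt (4*k+4) y with hA | hA
  · refine ⟨3*k+3, 4*k+4, ?_, hA, by linarith⟩
    have : sPt (2*k+1) = ((3*k+3 : ℤ), (4*k+4 : ℤ)) := by
      simp only [sPt, if_pos hodd, Prod.mk.injEq]; omega
    rw [← this]; exact mem_P_s _
  rcases le_or_gt (2*k+2) y with hB | hB
  · set j := (y - (2*k+2))/2 with hj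
    have hj1 : 0 ≤ j ∧ j ≤ k ∧ (y = 2*k+2+2*j ∨ y = 2*k+3+2*j) := by omega
    obtain ⟨hj0, hjk, hycase⟩ := hj1
    refine ⟨2*k+2+j, 2*k+2+2*j, ?_, by omega, ?_⟩
    · have : rPt (2*k+1) j = ((2*k+2+j : ℤ), (2*k+2+2*j : ℤ)) := by
        simp only [rPt, Prod.mk.injEq]; constructor <;> ring
      rw [← this]; exact mem_P_r _ j hj0 (by rw [if_pos hodd]; omega)
    · rcases hycase with h' | h'
      · have hlin : 2*k - 2*j - 1 ≤ u := by nlinarith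
        omega
      · rcases eq_or_lt_of_le hjk with hjk' | hjk'
        · omega
        · have hlin : 2*k - 2*j ≤ u := by nlinarith
          omega
  rcases le_or_gt 1 y with hC | hC
  · set i := (2*k+2-y)/2 with hi
    have hi1 : 0 ≤ i ∧ i ≤ k ∧ (y = 2*k+1-2*i ∨ (y = 2*k+2-2*i ∧ 1 ≤ i)) := by omega
    obtain ⟨hi0, hik, hycase⟩ := hi1
    refine ⟨2*k+2-i, 2*k+1-2*i, ?_, by omega, ?_⟩
    · have : qPt (2*k+1) i = ((2*k+2-i : ℤ), (2*k+1-2*i : ℤ)) := by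
        simp only [qPt, Prod.mk.injEq]; exact ⟨by ring, trivial⟩
      rw [← this]; exact mem_P_q _ i hi0 (by rw [if_pos hodd]; omega)
    · rcases hycase with h' | ⟨h', h1i⟩
      · have hlin : 2*k + 2*i + 2 ≤ u := by nlinarith
        omega
      · have hlin : 2*k + 2*i + 3 ≤ u := by nlinarith
        omega
  · have hy0 : y = 0 := by omega
    refine ⟨k+2, 0, ?_, by omega, ?_⟩
    · have : pPt (2*k+1) = ((k+2 : ℤ), (0:ℤ)) := by
        simp only [pPt, if_pos hodd, Prod.mk.injEq]; exact ⟨by omega, trivial⟩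
      rw [← this]; exact mem_P_p _
    · have hlin : 4*k + 5 ≤ u := by nlinarith
      omega

lemma cover_even (k u y : ℤ) (hk : 1 ≤ k) (hy : 0 ≤ y) (hu : 0 ≤ u)
    (hcong : (4:ℤ) ∣ u - y)
    (hbig : 8*k^2+8*k+2 ≤ 2*k*u + (2*k+2)*y) :
    ∃ p1 p2 : ℤ, ((p1,p2) : ℤ×ℤ) ∈ Pset (2*k) ∧ p2 ≤ y ∧ 4*p1-3*p2 ≤ u := by
  have heven : ¬ Odd (2*k) := Int.not_odd_iff_even.mpr ⟨k, by ring⟩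
  rcases le_or_gt (4*k+4) y with hA | hA
  · refine ⟨3*k+3, 4*k+4, ?_, hA, by linarith⟩
    have : sPt (2*k) = ((3*k+3 : ℤ), (4*k+4 : ℤ)) := by
      simp only [sPt, if_neg heven, Prod.mk.injEq]; omega
    rw [← this]; exact mem_P_s _
  rcases le_or_gt (4*k+2) y with hB0 | hB0
  · refine ⟨3*k+1, 4*k+1, ?_, by omega, ?_⟩
    · have : rPt (2*k) k = ((3*k+1 : ℤ), (4*k+1 : ℤ)) := by
        simp only [rPt, Prod.mk.injEq]; constructor <;> ring
      rw [← this]; exact mem_P_r _ k (by omega) (by rw [if_neg heven]; omega)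
    · omega
  rcases le_or_gt (2*k+1) y with hB | hB
  · set j := (y - (2*k+1))/2 with hj
    have hj1 : 0 ≤ j ∧ j ≤ k ∧ (y = 2*k+1+2*j ∨ (y = 2*k+2+2*j ∧ j ≤ k-1)) := by omega
    obtain ⟨hj0, hjk, hycase⟩ := hj1
    refine ⟨2*k+1+j, 2*k+1+2*j, ?_, by omega, ?_⟩
    · have : rPt (2*k) j = ((2*k+1+j : ℤ), (2*k+1+2*j : ℤ)) := rfl
      rw [← this]; exact mem_P_r _ j hj0 (by rw [if_neg heven]; omega)
    · rcases hycase with h' | ⟨h', hjk'⟩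
      · have hlin : 2*k - 2*j - 2 ≤ u := by nlinarith
        omega
      · have hlin : 2*k - 2*j - 1 ≤ u := by nlinarith
        omega
  rcases le_or_gt 2 y with hC | hC
  · set i := (2*k+1-y)/2 with hi
    have hi1 : 0 ≤ i ∧ i ≤ k-1 ∧ (y = 2*k-2*i ∨ (y = 2*k+1-2*i ∧ 1 ≤ i)) := by omega
    obtain ⟨hi0, hik, hycase⟩ := hi1
    refine ⟨2*k+1-i, 2*k-2*i, ?_, by omega, ?_⟩
    · have : qPt (2*k) i = ((2*k+1-i : ℤ), (2*k-2*i : ℤ)) := rfl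
      rw [← this]; exact mem_P_q _ i hi0 (by rw [if_neg heven]; omega)
    · rcases hycase with h' | ⟨h', h1i⟩
      · have hlin : 2*k + 2*i + 1 ≤ u := by nlinarith
        omega
      · have hlin : 2*k + 2*i + 2 ≤ u := by nlinarith
        omega
  · refine ⟨k+1, 0, ?_, by omega, ?_⟩
    · have : pPt (2*k) = ((k+1 : ℤ), (0:ℤ)) := by
        simp only [pPt, if_neg heven, Prod.mk.injEq]; exact ⟨by omega, trivial⟩
      rw [← this]; exact mem_P_p _
    · have hycase : y = 0 ∨ y = 1 := by omega
      rcases hycase with h' | h'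
      · have hlin : 4*k + 5 ≤ u := by nlinarith
        omega
      · have hlin : 4*k + 3 ≤ u := by nlinarith
        omega

-- main lemma, odd case, integer form
lemma main_odd (k : ℤ) (hk : 1 ≤ k) :
    (∀ a ∈ Dset (2*k+1), dotZ (lVec (2*k+1)) a ≤ Vval (2*k+1)) ∧
    (∀ a ∈ Pset (2*k+1), Vval (2*k+1) ≤ dotZ (lVec (2*k+1)) a) ∧
    (((3*k+1 : ℤ), (4*k+1 : ℤ)) ∈ Dset (2*k+1) ∧
      dotZ (lVec (2*k+1)) ((3*k+1 : ℤ), (4*k+1 : ℤ)) = Vval (2*k+1) ∧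
      ((k+2 : ℤ), (1 : ℤ)) ∈ Pset (2*k+1) ∧
      dotZ (lVec (2*k+1)) ((k+2 : ℤ), (1:ℤ)) = Vval (2*k+1)) := by
  have hodd : Odd (2*k+1) := ⟨k, by ring⟩
  have hl : lVec (2*k+1) = ((4*k : ℤ), (1-2*k : ℤ)) := by
    simp only [lVec, if_pos hodd, Prod.mk.injEq]; constructor <;> ring
  have hV : Vval (2*k+1) = 4*k^2+6*k+1 := by
    simp only [Vval, if_pos hodd]; ring
  refine ⟨?_, ?_, ?_, ?_, ?_, ?_⟩
  · -- max over D
    rintro ⟨x, y⟩ ⟨⟨hy, hxy⟩, hna⟩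
    by_contra hcon
    push_neg at hcon
    have hcon' := Int.add_one_le_iff.mpr hcon
    simp only [hl, hV, dotZ] at hcon'
    have hbig : 8*k^2+12*k+4 ≤ 2*k*(4*x-3*y) + (2*k+2)*y := by nlinarith
    obtain ⟨p1, p2, hp, h1, h2⟩ :=
      cover_odd k (4*x-3*y) y hk hy (by linarith) ⟨x - y, by ring⟩ hbig
    exact hna (mem_P_add hp h1 h2)
  · -- min over P
    rintro a ha
    rcases ha with ((h | h) | ⟨i, hi0, hi1, h⟩) | ⟨j, hj0, hj1, h⟩
    · have hp' : pPt (2*k+1) = ((k+2 : ℤ), (0:ℤ)) := by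
        simp only [pPt, if_pos hodd, Prod.mk.injEq]; exact ⟨by omega, trivial⟩
      rw [h, hp', hl, hV]; simp only [dotZ]; nlinarith
    · have hs' : sPt (2*k+1) = ((3*k+3 : ℤ), (4*k+4 : ℤ)) := by
        simp only [sPt, if_pos hodd, Prod.mk.injEq]; omega
      rw [h, hs', hl, hV]; simp only [dotZ]; nlinarith
    · rw [if_pos hodd] at hi1
      have hik : i ≤ k := by omega
      rw [h, hl, hV]; simp only [dotZ, qPt]; nlinarith
    · rw [h, hl, hV]; simp only [dotZ, rPt]; nlinarith
  · -- equality point in D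
    constructor
    · exact ⟨by simp; linarith, by simp; linarith⟩
    · rintro hmem
      obtain ⟨p, hp, w, hw, heq⟩ := Set.mem_add.mp hmem
      have he1 : p.1 + w.1 = 3*k+1 := congrArg Prod.fst heq
      have he2 : p.2 + w.2 = 4*k+1 := congrArg Prod.snd heq
      obtain ⟨hw1, hw2⟩ := hw
      rcases hp with ((h | h) | ⟨i, hi0, hi1, h⟩) | ⟨j, hj0, hj1, h⟩
      · have hp' : pPt (2*k+1) = ((k+2 : ℤ), (0:ℤ)) := by
          simp only [pPt, if_pos hodd, Prod.mk.injEq]; exact ⟨by omega, trivial⟩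
        rw [hp'] at h; rw [h] at he1 he2; simp at he1 he2; omega
      · have hs' : sPt (2*k+1) = ((3*k+3 : ℤ), (4*k+4 : ℤ)) := by
          simp only [sPt, if_pos hodd, Prod.mk.injEq]; omega
        rw [hs'] at h; rw [h] at he1 he2; simp at he1 he2; omega
      · rw [if_pos hodd] at hi1
        rw [h] at he1 he2; simp only [qPt] at he1 he2; omega
      · rw [if_pos hodd] at hj1
        rw [h] at he1 he2; simp only [rPt] at he1 he2; omega
  · rw [hl, hV]; simp only [dotZ]; ring
  · have hq' : ((k+2 : ℤ), (1 : ℤ)) = qPt (2*k+1) k := by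
      simp only [qPt, Prod.mk.injEq]; constructor <;> ring
    rw [hq']; exact mem_P_q _ k (by omega) (by rw [if_pos hodd]; omega)
  · rw [hl, hV]; simp only [dotZ]; ring

lemma main_even (k : ℤ) (hk : 1 ≤ k) :
    (∀ a ∈ Dset (2*k), dotZ (lVec (2*k)) a ≤ Vval (2*k)) ∧
    (∀ a ∈ Pset (2*k), Vval (2*k) ≤ dotZ (lVec (2*k)) a) ∧
    (((3*k : ℤ), (4*k : ℤ)) ∈ Dset (2*k) ∧
      dotZ (lVec (2*k)) ((3*k : ℤ), (4*k : ℤ)) = Vval (2*k) ∧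
      ((k+1 : ℤ), (0 : ℤ)) ∈ Pset (2*k) ∧
      dotZ (lVec (2*k)) ((k+1 : ℤ), (0:ℤ)) = Vval (2*k)) := by
  have heven : ¬ Odd (2*k) := Int.not_odd_iff_even.mpr ⟨k, by ring⟩
  have hl : lVec (2*k) = ((4*k : ℤ), (1-2*k : ℤ)) := by
    simp only [lVec, if_neg heven, Prod.mk.injEq]; exact ⟨by ring, trivial⟩
  have hV : Vval (2*k) = 4*k^2+4*k := by
    simp only [Vval, if_neg heven]; ring
  refine ⟨?_, ?_, ?_, ?_, ?_, ?_⟩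
  · rintro ⟨x, y⟩ ⟨⟨hy, hxy⟩, hna⟩
    by_contra hcon
    push_neg at hcon
    have hcon' := Int.add_one_le_iff.mpr hcon
    simp only [hl, hV, dotZ] at hcon'
    have hbig : 8*k^2+8*k+2 ≤ 2*k*(4*x-3*y) + (2*k+2)*y := by nlinarith
    obtain ⟨p1, p2, hp, h1, h2⟩ :=
      cover_even k (4*x-3*y) y hk hy (by linarith) ⟨x - y, by ring⟩ hbig
    exact hna (mem_P_add hp h1 h2)
  · rintro a ha
    rcases ha with ((h | h) | ⟨i, hi0, hi1, h⟩) | ⟨j, hj0, hj1, h⟩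
    · have hp' : pPt (2*k) = ((k+1 : ℤ), (0:ℤ)) := by
        simp only [pPt, if_neg heven, Prod.mk.injEq]; exact ⟨by omega, trivial⟩
      rw [h, hp', hl, hV]; simp only [dotZ]; nlinarith
    · have hs' : sPt (2*k) = ((3*k+3 : ℤ), (4*k+4 : ℤ)) := by
        simp only [sPt, if_neg heven, Prod.mk.injEq]; omega
      rw [h, hs', hl, hV]; simp only [dotZ]; nlinarith
    · rw [if_neg heven] at hi1
      have hik : i ≤ k-1 := by omega
      rw [h, hl, hV]; simp only [dotZ, qPt]; nlinarith
    · rw [h, hl, hV]; simp only [dotZ, rPt]; nlinarith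
  · constructor
    · exact ⟨by simp; linarith, by simp; linarith⟩
    · rintro hmem
      obtain ⟨p, hp, w, hw, heq⟩ := Set.mem_add.mp hmem
      have he1 : p.1 + w.1 = 3*k := congrArg Prod.fst heq
      have he2 : p.2 + w.2 = 4*k := congrArg Prod.snd heq
      obtain ⟨hw1, hw2⟩ := hw
      rcases hp with ((h | h) | ⟨i, hi0, hi1, h⟩) | ⟨j, hj0, hj1, h⟩
      · have hp' : pPt (2*k) = ((k+1 : ℤ), (0:ℤ)) := by
          simp only [pPt, if_neg heven, Prod.mk.injEq]; exact ⟨by omega, trivial⟩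
        rw [hp'] at h; rw [h] at he1 he2; simp at he1 he2; omega
      · have hs' : sPt (2*k) = ((3*k+3 : ℤ), (4*k+4 : ℤ)) := by
          simp only [sPt, if_neg heven, Prod.mk.injEq]; omega
        rw [hs'] at h; rw [h] at he1 he2; simp at he1 he2; omega
      · rw [if_neg heven] at hi1
        rw [h] at he1 he2; simp only [qPt] at he1 he2; omega
      · rw [if_neg heven] at hj1
        rw [h] at he1 he2; simp only [rPt] at he1 he2; omega
  · rw [hl, hV]; simp only [dotZ]; ring
  · have hp' : ((k+1 : ℤ), (0 : ℤ)) = pPt (2*k) := by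
      simp only [pPt, if_neg heven, Prod.mk.injEq]; exact ⟨by omega, trivial⟩
    rw [hp']; exact mem_P_p _
  · rw [hl, hV]; simp only [dotZ]; ring

/-- for every integer `n ≥ 2`, `l_n · a ≤ V_n` for every `a ∈ D_n`,
with equality at `((3n−1)/2, 2n−1)` for odd `n` and at `(3n/2, 2n)` for even `n`;
and `l_n · a ≥ V_n` for every `a ∈ P_n`, with equality at `((n+3)/2, 1)` for odd `n`
and at `(n/2+1, 0)` for even `n`.  In particular `max_{D_n} l_n · a = min_{P_n} l_n · a = V_n`. -/
theorem lVec_max_min (n : ℕ) (hn : 2 ≤ n) :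
    (∀ a ∈ Dset (n : ℤ), dotZ (lVec (n : ℤ)) a ≤ Vval (n : ℤ)) ∧
    (∀ a ∈ Pset (n : ℤ), Vval (n : ℤ) ≤ dotZ (lVec (n : ℤ)) a) ∧
    (Odd n →
      ((3 * (n : ℤ) - 1) / 2, 2 * (n : ℤ) - 1) ∈ Dset (n : ℤ) ∧
      dotZ (lVec (n : ℤ)) ((3 * (n : ℤ) - 1) / 2, 2 * (n : ℤ) - 1) = Vval (n : ℤ) ∧
      (((n : ℤ) + 3) / 2, 1) ∈ Pset (n : ℤ) ∧
      dotZ (lVec (n : ℤ)) (((n : ℤ) + 3) / 2, 1) = Vval (n : ℤ)) ∧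
    (Even n →
      (3 * (n : ℤ) / 2, 2 * (n : ℤ)) ∈ Dset (n : ℤ) ∧
      dotZ (lVec (n : ℤ)) (3 * (n : ℤ) / 2, 2 * (n : ℤ)) = Vval (n : ℤ) ∧
      ((n : ℤ) / 2 + 1, 0) ∈ Pset (n : ℤ) ∧
      dotZ (lVec (n : ℤ)) ((n : ℤ) / 2 + 1, 0) = Vval (n : ℤ)) := by
  rcases Nat.even_or_odd n with he | ho
  · -- n even
    obtain ⟨m, hm⟩ := he
    have hk : (n : ℤ) = 2 * (m : ℤ) := by push_cast; omega
    have hk1 : 1 ≤ (m : ℤ) := by omega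
    obtain ⟨c1, c2, c3, c4, c5, c6⟩ := main_even (m : ℤ) hk1
    have hd1 : (3 * (n:ℤ) / 2 : ℤ) = 3 * (m:ℤ) := by rw [hk]; omega
    have hd2 : (2 * (n:ℤ) : ℤ) = 4 * (m:ℤ) := by rw [hk]; ring
    have hd3 : ((n:ℤ) / 2 + 1 : ℤ) = (m:ℤ) + 1 := by rw [hk]; omega
    refine ⟨by rw [hk]; exact c1, by rw [hk]; exact c2, ?_, ?_⟩
    · intro hodd'
      exfalso; rw [Nat.odd_iff] at hodd'; omega
    · intro _
      rw [hk, ← hk, hd1, hd2, hd3, hk]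
      exact ⟨c3, c4, c5, c6⟩
  · -- n odd
    obtain ⟨m, hm⟩ := ho
    have hk : (n : ℤ) = 2 * (m : ℤ) + 1 := by push_cast; omega
    have hk1 : 1 ≤ (m : ℤ) := by omega
    obtain ⟨c1, c2, c3, c4, c5, c6⟩ := main_odd (m : ℤ) hk1
    have hd1 : ((3 * (n:ℤ) - 1) / 2 : ℤ) = 3 * (m:ℤ) + 1 := by rw [hk]; omega
    have hd2 : (2 * (n:ℤ) - 1 : ℤ) = 4 * (m:ℤ) + 1 := by rw [hk]; ring
    have hd3 : (((n:ℤ) + 3) / 2 : ℤ) = (m:ℤ) + 2 := by rw [hk]; omega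
    refine ⟨by rw [hk]; exact c1, by rw [hk]; exact c2, ?_, ?_⟩
    · intro _
      rw [hd1, hd2, hd3, hk]
      exact ⟨c3, c4, c5, c6⟩
    · intro heven'
      exfalso; rw [Nat.even_iff] at heven'; omega
end

section
/- For every integer n ≥ 1, the quotient S/J_n is a ℂ-vector space of dimension (n+1)(n+2)/2. -/
set_option synthInstance.maxHeartbeats 1000000
set_option maxHeartbeats 1000000

open Pointwise MvPolynomial

/-- The polynomial ring `ℂ[u,v]`. -/
abbrev CuvPoly : Type := MvPolynomial (Fin 2) ℂ

/-- The variable `u`. -/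
noncomputable def uP : CuvPoly := X 0

/-- The variable `v`. -/
noncomputable def vP : CuvPoly := X 1

/-- `S`, the `ℂ`-subalgebra of `ℂ[u,v]` generated by `u`, `u³v⁴` and `uv`. -/
noncomputable def Ssub : Subalgebra ℂ CuvPoly :=
  Algebra.adjoin ℂ {uP, uP ^ 3 * vP ^ 4, uP * vP}

/-- `u` as an element of `S`. -/
noncomputable def U : Ssub := ⟨uP, Algebra.subset_adjoin (by simp)⟩

/-- `u³v⁴` as an element of `S`. -/
noncomputable def Y : Ssub := ⟨uP ^ 3 * vP ^ 4, Algebra.subset_adjoin (by simp)⟩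

/-- `uv` as an element of `S`. -/
noncomputable def UV : Ssub := ⟨uP * vP, Algebra.subset_adjoin (by simp)⟩

/-- The ideal `I = ⟨u−1, u³v⁴−1, uv−1⟩` of `S`. -/
noncomputable def Iid : Ideal Ssub := Ideal.span {U - 1, Y - 1, UV - 1}

/-- The ideal `J_n = I^{n+1}` of `S`. -/
noncomputable def Jid (n : ℕ) : Ideal Ssub := Iid ^ (n + 1)

/-! ### Part B: the model quotient `ℂ[x,y]/(x,y)^{n+1}` and its dimension -/

noncomputable section

def mId : Ideal CuvPoly := Ideal.span {X 0, X 1}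

def degd (d : Fin 2 →₀ ℕ) : ℕ := d 0 + d 1

lemma degd_add (d e : Fin 2 →₀ ℕ) : degd (d + e) = degd d + degd e := by
  simp [degd, Finsupp.add_apply]; ring

def Tid (k : ℕ) : Ideal CuvPoly where
  carrier := {p | ∀ d ∈ p.support, k ≤ degd d}
  add_mem' := by
    intro p q hp hq d hd
    rcases Finset.mem_union.mp (MvPolynomial.support_add hd) with h | h
    · exact hp d h
    · exact hq d h
  zero_mem' := by simp
  smul_mem' := by
    intro c p hp d hd
    rw [smul_eq_mul] at hd
    obtain ⟨d1, h1, d2, h2, rfl⟩ := Finset.mem_add.mp (MvPolynomial.support_mul c p hd)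
    have := hp d2 h2
    rw [degd_add]; omega

lemma mpow_le_Tid (k : ℕ) : mId ^ k ≤ Tid k := by
  induction k with
  | zero => intro p _ d _; exact Nat.zero_le _
  | succ k ih =>
    rw [pow_succ]
    refine Ideal.mul_le.mpr fun r hr s hs => ?_
    intro d hd
    obtain ⟨d1, h1, d2, h2, rfl⟩ := Finset.mem_add.mp (MvPolynomial.support_mul r s hd)
    have hr' := ih hr d1 h1
    have hs' : 1 ≤ degd d2 := by
      have hm : mId ≤ Tid 1 := by
        rw [mId, Ideal.span_le]
        intro x hx
        rcases hx with h | h <;> subst h <;> intro d hd <;>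
          · rw [MvPolynomial.support_X] at hd
            simp only [Finset.mem_singleton] at hd
            subst hd
            simp [degd, Finsupp.single_apply]
      exact hm hs d2 h2
    rw [degd_add]; omega

lemma monomial_mem_mpow {k : ℕ} {d : Fin 2 →₀ ℕ} (h : k ≤ degd d) (c : ℂ) :
    (monomial d c : CuvPoly) ∈ mId ^ k := by
  have hd : d = Finsupp.single 0 (d 0) + Finsupp.single 1 (d 1) := by
    ext i; fin_cases i <;> simp [Finsupp.single_apply]
  have h1 : (monomial d (1:ℂ) : CuvPoly) = X 0 ^ (d 0) * X 1 ^ (d 1) := by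
    rw [X_pow_eq_monomial, X_pow_eq_monomial, monomial_mul, one_mul, ← hd]
  have h2 : (X 0 : CuvPoly) ^ (d 0) * X 1 ^ (d 1) ∈ mId ^ (degd d) := by
    rw [degd, pow_add]
    exact Ideal.mul_mem_mul (Ideal.pow_mem_pow (Ideal.subset_span (by simp)) _)
      (Ideal.pow_mem_pow (Ideal.subset_span (by simp)) _)
  have h3 : (monomial d c : CuvPoly) = C c * monomial d 1 := by
    rw [C_mul_monomial, mul_one]
  rw [h3, h1]
  exact Ideal.mul_mem_left _ _ (Ideal.pow_le_pow_right h h2)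

/-- index type -/
def Idx (n : ℕ) : Type := (k : Fin (n+1)) × Fin (k.1 + 1)

instance (n : ℕ) : Fintype (Idx n) := by unfold Idx; infer_instance

def Fmap {n : ℕ} (x : Idx n) : Fin 2 →₀ ℕ :=
  Finsupp.single 0 x.2.1 + Finsupp.single 1 (x.1.1 - x.2.1)

lemma Fmap_apply0 {n : ℕ} (x : Idx n) : Fmap x 0 = x.2.1 := by
  simp [Fmap, Finsupp.single_apply]

lemma Fmap_apply1 {n : ℕ} (x : Idx n) : Fmap x 1 = x.1.1 - x.2.1 := by
  simp [Fmap, Finsupp.single_apply]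

lemma degd_Fmap {n : ℕ} (x : Idx n) : degd (Fmap x) = x.1.1 := by
  have := x.2.2
  simp [degd, Fmap_apply0, Fmap_apply1]
  omega

lemma Fmap_injective {n : ℕ} : Function.Injective (Fmap (n := n)) := by
  rintro ⟨⟨k, hk⟩, ⟨i, hi⟩⟩ ⟨⟨l, hl⟩, ⟨j, hj⟩⟩ h
  have h0 : i = j := by
    have := congrArg (fun f => f 0) h
    simpa [Fmap, Finsupp.single_apply] using this
  have h1 : k - i = l - j := by
    have := congrArg (fun f => f 1) h
    simpa [Fmap, Finsupp.single_apply] using this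
  have hi' : i < k + 1 := hi
  have hj' : j < l + 1 := hj
  have hkl : k = l := by omega
  subst h0; subst hkl; rfl

lemma Fmap_surj {n : ℕ} {d : Fin 2 →₀ ℕ} (hd : degd d ≤ n) : ∃ x : Idx n, Fmap x = d := by
  refine ⟨⟨⟨d 0 + d 1, by simp [degd] at hd; omega⟩, ⟨d 0, by show d 0 < d 0 + d 1 + 1; omega⟩⟩, ?_⟩
  ext i; fin_cases i
  · simp [Fmap, Finsupp.single_apply]
  · simp [Fmap, Finsupp.single_apply]

open Finset

abbrev Qr (n : ℕ) := CuvPoly ⧸ (mId ^ (n+1))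

def bfam (n : ℕ) (x : Idx n) : Qr n := Ideal.Quotient.mk _ (monomial (Fmap x) 1)

lemma mk_smul (n : ℕ) (c : ℂ) (p : CuvPoly) :
    Ideal.Quotient.mk (mId ^ (n+1)) (c • p) = c • Ideal.Quotient.mk (mId ^ (n+1)) p := by
  rw [← Ideal.Quotient.mkₐ_eq_mk ℂ (mId ^ (n+1))]
  exact map_smul _ c p

lemma bfam_indep (n : ℕ) : LinearIndependent ℂ (bfam n) := by
  classical
  rw [linearIndependent_iff']
  intro s g hsum i hi
  by_contra hg
  set q : CuvPoly := ∑ j ∈ s, g j • monomial (Fmap j) 1 with hq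
  have hq0 : Ideal.Quotient.mk (mId ^ (n+1)) q = 0 := by
    rw [hq, map_sum]
    simpa [bfam, mk_smul] using hsum
  have hmem : q ∈ mId ^ (n+1) := Ideal.Quotient.eq_zero_iff_mem.mp hq0
  have hco : coeff (Fmap i) q = g i := by
    rw [hq, MvPolynomial.coeff_sum]
    rw [Finset.sum_congr rfl (fun j _ => ?_), Finset.sum_ite_eq' s i g, if_pos hi]
    rw [smul_monomial, smul_eq_mul, mul_one, coeff_monomial]
    simp [Fmap_injective.eq_iff]
  have hsup : Fmap i ∈ q.support := by rw [mem_support_iff, hco]; exact hg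
  have h1 := mpow_le_Tid (n+1) hmem (Fmap i) hsup
  rw [degd_Fmap] at h1
  have h2 := i.1.2
  omega

lemma bfam_span (n : ℕ) : ⊤ ≤ Submodule.span ℂ (Set.range (bfam n)) := by
  classical
  rintro q -
  obtain ⟨p, rfl⟩ := Ideal.Quotient.mk_surjective q
  have hp := (support_sum_monomial_coeff p).symm
  rw [← Finset.sum_filter_add_sum_filter_not p.support (fun d => degd d ≤ n)] at hp
  have hhigh : (∑ d ∈ p.support.filter (fun d => ¬ degd d ≤ n), monomial d (coeff d p)) ∈ mId ^ (n+1) := by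
    refine Submodule.sum_mem _ fun d hd => ?_
    have := (Finset.mem_filter.mp hd).2
    exact monomial_mem_mpow (by omega) _
  have hmk : Ideal.Quotient.mk (mId^(n+1)) p =
      Ideal.Quotient.mk (mId^(n+1)) (∑ d ∈ p.support.filter (fun d => degd d ≤ n), monomial d (coeff d p)) := by
    conv_lhs => rw [hp]
    rw [map_add, Ideal.Quotient.eq_zero_iff_mem.mpr hhigh, add_zero]
  rw [hmk, map_sum]
  refine Submodule.sum_mem _ fun d hd => ?_
  obtain ⟨x, rfl⟩ := Fmap_surj (Finset.mem_filter.mp hd).2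
  have h1 : (monomial (Fmap x) (coeff (Fmap x) p) : CuvPoly) = coeff (Fmap x) p • monomial (Fmap x) 1 := by
    rw [smul_monomial, smul_eq_mul, mul_one]
  rw [h1, mk_smul]
  exact Submodule.smul_mem _ _ (Submodule.subset_span ⟨x, rfl⟩)

def bas (n : ℕ) : Module.Basis (Idx n) ℂ (Qr n) := Module.Basis.mk (bfam_indep n) (bfam_span n)

lemma card_Idx (n : ℕ) : Fintype.card (Idx n) = (n+1)*(n+2)/2 := by
  have h1 : Fintype.card (Idx n) = ∑ k : Fin (n+1), (k.1+1) := by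
    simp [Idx, Fintype.card_sigma]
  rw [h1, Fin.sum_univ_eq_sum_range (fun i => i + 1) (n+1)]
  have h2 : ∑ i ∈ range (n+2), i = ∑ i ∈ range (n+1), (i+1) := by
    rw [Finset.sum_range_succ' (fun i => i) (n+1)]
    simp
  have h3 := Finset.sum_range_id_mul_two (n+2)
  rw [← h2]
  have h4 : (n+1)*(n+2) = (∑ i ∈ range (n+2), i) * 2 := by
    rw [h3, show n+2-1 = n+1 from rfl]; ring
  rw [h4]
  omega

instance QrFD (n : ℕ) : FiniteDimensional ℂ (Qr n) := Module.Finite.of_basis (bas n)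

lemma finrank_Qr (n : ℕ) : Module.finrank ℂ (Qr n) = (n+1)*(n+2)/2 := by
  rw [Module.finrank_eq_card_basis (bas n), card_Idx]

/-! ### Part A: the algebra isomorphism `S/J_n ≅ ℂ[x,y]/(x,y)^{n+1}` -/

def pmap (n : ℕ) : Ssub →ₐ[ℂ] (Ssub ⧸ Jid n) := Ideal.Quotient.mkₐ ℂ (Jid n)

def phi0 (n : ℕ) : CuvPoly →ₐ[ℂ] (Ssub ⧸ Jid n) :=
  aeval ![pmap n (U - 1), pmap n (UV - U)]

lemma hU1 : U - 1 ∈ Iid := Ideal.subset_span (by simp)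
lemma hY1 : Y - 1 ∈ Iid := Ideal.subset_span (by simp)
lemma hUV1 : UV - 1 ∈ Iid := Ideal.subset_span (by simp)
lemma hUVU : UV - U ∈ Iid := by
  have h : UV - U = (UV - 1) - (U - 1) := by ring
  rw [h]; exact sub_mem hUV1 hU1

lemma phi0_X0 (n : ℕ) : phi0 n (X 0) = pmap n (U - 1) := by simp [phi0]
lemma phi0_X1 (n : ℕ) : phi0 n (X 1) = pmap n (UV - U) := by simp [phi0]

lemma phi0_ker (n : ℕ) : ∀ a ∈ mId ^ (n+1), phi0 n a = 0 := by
  intro a ha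
  have hmap : Ideal.map (phi0 n) mId ≤ Ideal.map (Ideal.Quotient.mk (Jid n)) Iid := by
    rw [mId, Ideal.map_span, Set.image_pair, Ideal.span_le]
    intro x hx
    simp only [Set.mem_insert_iff, Set.mem_singleton_iff] at hx
    rcases hx with rfl | rfl
    · rw [phi0_X0, pmap, Ideal.Quotient.mkₐ_eq_mk]
      exact Ideal.mem_map_of_mem _ hU1
    · rw [phi0_X1, pmap, Ideal.Quotient.mkₐ_eq_mk]
      exact Ideal.mem_map_of_mem _ hUVU
  have h1 : phi0 n a ∈ Ideal.map (phi0 n : CuvPoly →+* Ssub ⧸ Jid n) (mId ^ (n+1)) := Ideal.mem_map_of_mem _ ha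
  have e := Ideal.map_pow (phi0 n : CuvPoly →+* Ssub ⧸ Jid n) (I := mId) (n+1)
  rw [e] at h1
  have h2 := Ideal.pow_right_mono hmap (n+1) h1
  have e2 := Ideal.map_pow (Ideal.Quotient.mk (Jid n)) (I := Iid) (n+1)
  rw [← e2] at h2
  have h3 : Ideal.map (Ideal.Quotient.mk (Jid n)) (Iid ^ (n+1)) = ⊥ := by
    rw [show Iid ^ (n+1) = Jid n from rfl, Ideal.map_quotient_self]
  rw [h3] at h2
  simpa using h2

def phibar (n : ℕ) : Qr n →ₐ[ℂ] (Ssub ⧸ Jid n) :=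
  Ideal.Quotient.liftₐ _ (phi0 n) (phi0_ker n)

lemma phibar_mk (n : ℕ) (p : CuvPoly) :
    phibar n (Ideal.Quotient.mk (mId ^ (n+1)) p) = phi0 n p := by
  rfl

def xq (n : ℕ) : Qr n := Ideal.Quotient.mk _ (X 0)
def yq (n : ℕ) : Qr n := Ideal.Quotient.mk _ (X 1)
def binv (n : ℕ) : Qr n := ∑ k ∈ Finset.range (n+1), (- xq n)^k

lemma xq_pow (n : ℕ) : (xq n)^(n+1) = 0 := by
  rw [xq, ← map_pow, Ideal.Quotient.eq_zero_iff_mem]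
  exact Ideal.pow_mem_pow (Ideal.subset_span (by simp)) _

lemma hbinv (n : ℕ) : (1 + xq n) * binv n = 1 := by
  have h := geom_sum_mul (-xq n) (n+1)
  have h2 : (-xq n)^(n+1) = 0 := by
    rw [show -xq n = Ideal.Quotient.mk (mId^(n+1)) (-X 0) from rfl, ← map_pow,
      Ideal.Quotient.eq_zero_iff_mem]
    exact Ideal.pow_mem_pow (neg_mem (Ideal.subset_span (by simp))) _
  rw [h2] at h
  rw [binv]
  linear_combination -h

def psi0 (n : ℕ) : CuvPoly →ₐ[ℂ] Qr n := aeval ![1 + xq n, binv n * (1 + xq n + yq n)]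

def psiS (n : ℕ) : Ssub →ₐ[ℂ] Qr n := (psi0 n).comp Ssub.val

lemma psi0_u (n : ℕ) : psi0 n uP = 1 + xq n := by simp [psi0, uP]
lemma psi0_v (n : ℕ) : psi0 n vP = binv n * (1 + xq n + yq n) := by simp [psi0, vP]

def mQ (n : ℕ) : Ideal (Qr n) := Ideal.span {xq n, yq n}

lemma mQ_pow_le (n : ℕ) : (mQ n)^(n+1) ≤ ⊥ := by
  have hle : mQ n ≤ Ideal.map (Ideal.Quotient.mk (mId ^ (n+1))) mId := by
    rw [mQ, Ideal.span_le]
    intro z hz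
    simp only [Set.mem_insert_iff, Set.mem_singleton_iff] at hz
    rcases hz with rfl | rfl
    · exact Ideal.mem_map_of_mem _ (Ideal.subset_span (by simp))
    · exact Ideal.mem_map_of_mem _ (Ideal.subset_span (by simp))
  calc (mQ n)^(n+1) ≤ (Ideal.map (Ideal.Quotient.mk (mId^(n+1))) mId)^(n+1) :=
        Ideal.pow_right_mono hle _
    _ = Ideal.map (Ideal.Quotient.mk (mId^(n+1))) (mId^(n+1)) := (Ideal.map_pow _ _ _).symm
    _ = ⊥ := Ideal.map_quotient_self _

lemma psiS_val (n : ℕ) (s : Ssub) : psiS n s = psi0 n (s : CuvPoly) := rfl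

lemma psiS_U (n : ℕ) : psiS n (U - 1) = xq n := by
  rw [psiS_val, show ((U - 1 : Ssub) : CuvPoly) = uP - 1 from rfl,
    map_sub, map_one, psi0_u]
  ring

lemma psiS_UV (n : ℕ) : psiS n (UV - 1) = xq n + yq n := by
  rw [psiS_val, show ((UV - 1 : Ssub) : CuvPoly) = uP * vP - 1 from rfl,
    map_sub, map_one, map_mul, psi0_u, psi0_v]
  linear_combination (1 + xq n + yq n) * hbinv n

lemma psiS_UVU (n : ℕ) : psiS n (UV - U) = yq n := by
  rw [psiS_val, show ((UV - U : Ssub) : CuvPoly) = uP * vP - uP from rfl,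
    map_sub, map_mul, psi0_u, psi0_v]
  linear_combination (1 + xq n + yq n) * hbinv n

lemma psiS_Y_mem (n : ℕ) : psiS n (Y - 1) ∈ mQ n := by
  rw [psiS_val, show ((Y - 1 : Ssub) : CuvPoly) = uP ^ 3 * vP ^ 4 - 1 from rfl,
    map_sub, map_one, map_mul, map_pow, map_pow, psi0_u, psi0_v]
  rw [mQ, Ideal.mem_span_pair]
  set s := 1 + xq n + yq n with hs
  refine ⟨binv n * ((1 + s + s^2 + s^3) - 1), binv n * (1 + s + s^2 + s^3), ?_⟩
  linear_combination (-(binv n * s^4 * (1 + (1 + xq n) * binv n + (1 + xq n)^2 * (binv n)^2) + 1)) * hbinv n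

lemma psiS_ker (n : ℕ) : ∀ a ∈ Jid n, psiS n a = 0 := by
  intro a ha
  have hmap : Ideal.map (psiS n) Iid ≤ mQ n := by
    rw [Iid, Ideal.map_span, Ideal.span_le]
    intro z hz
    simp only [Set.image_insert_eq, Set.image_singleton, Set.mem_insert_iff,
      Set.mem_singleton_iff] at hz
    rcases hz with rfl | rfl | rfl
    · rw [psiS_U]; exact Ideal.subset_span (by simp)
    · exact psiS_Y_mem n
    · rw [psiS_UV]
      exact add_mem (Ideal.subset_span (by simp)) (Ideal.subset_span (by simp))
  have h1 : psiS n a ∈ Ideal.map (psiS n) (Jid n) := Ideal.mem_map_of_mem _ ha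
  rw [Jid, Ideal.map_pow (psiS n)] at h1
  have h2 := Ideal.pow_right_mono hmap (n+1) h1
  have h3 := mQ_pow_le n h2
  simpa using h3

def psibar (n : ℕ) : (Ssub ⧸ Jid n) →ₐ[ℂ] Qr n :=
  Ideal.Quotient.liftₐ _ (psiS n) (psiS_ker n)

lemma psibar_mk (n : ℕ) (s : Ssub) :
    psibar n (Ideal.Quotient.mk (Jid n) s) = psiS n s := by
  rfl

lemma psibar_phibar (n : ℕ) : (psibar n).comp (phibar n) = AlgHom.id ℂ (Qr n) := by
  apply Ideal.Quotient.algHom_ext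
  apply MvPolynomial.algHom_ext
  intro i
  fin_cases i
  · show psibar n (phibar n (Ideal.Quotient.mk _ (X 0))) = Ideal.Quotient.mk _ (X 0)
    rw [phibar_mk, phi0_X0, pmap, Ideal.Quotient.mkₐ_eq_mk, psibar_mk, psiS_U]
    rfl
  · show psibar n (phibar n (Ideal.Quotient.mk _ (X 1))) = Ideal.Quotient.mk _ (X 1)
    rw [phibar_mk, phi0_X1, pmap, Ideal.Quotient.mkₐ_eq_mk, psibar_mk, psiS_UVU]
    rfl

lemma UY_eq : U * Y = UV ^ 4 := by
  refine Subtype.ext ?_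
  show uP * (uP ^ 3 * vP ^ 4) = (uP * vP) ^ 4
  ring

lemma phibar_surj (n : ℕ) : Function.Surjective (phibar n) := by
  have hU : pmap n U ∈ (phibar n).range := by
    refine ⟨Ideal.Quotient.mk _ (X 0 + 1), ?_⟩
    show phibar n (Ideal.Quotient.mk _ (X 0 + 1)) = pmap n U
    rw [phibar_mk, map_add, map_one, phi0_X0, map_sub, map_one]
    ring
  have hUV : pmap n UV ∈ (phibar n).range := by
    refine ⟨Ideal.Quotient.mk _ (X 0 + X 1 + 1), ?_⟩
    show phibar n (Ideal.Quotient.mk _ (X 0 + X 1 + 1)) = pmap n UV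
    rw [phibar_mk, map_add, map_add, map_one, phi0_X0, phi0_X1, map_sub, map_sub, map_one]
    ring
  have hY : pmap n Y ∈ (phibar n).range := by
    set t := pmap n U with ht
    have hg : (∑ k ∈ Finset.range (n+1), (1 - t)^k) ∈ (phibar n).range :=
      Subalgebra.sum_mem _ fun k _ => pow_mem (sub_mem (one_mem _) hU) k
    have htg : t * (∑ k ∈ Finset.range (n+1), (1 - t)^k) = 1 := by
      have h := geom_sum_mul (1 - t) (n+1)
      have h0 : (1 - t)^(n+1) = 0 := by
        have he : (1 : Ssub ⧸ Jid n) - t = pmap n (1 - U) := by rw [map_sub, map_one]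
        rw [he, ← map_pow, pmap, Ideal.Quotient.mkₐ_eq_mk, Ideal.Quotient.eq_zero_iff_mem]
        have hm : (1 : Ssub) - U ∈ Iid := by
          rw [show (1 : Ssub) - U = -(U - 1) by ring]
          exact neg_mem hU1
        exact Ideal.pow_mem_pow hm (n+1)
      rw [h0] at h
      linear_combination -h
    have hty : t * pmap n Y = (pmap n UV)^4 := by
      rw [ht, ← map_mul, UY_eq, map_pow]
    have hYe : pmap n Y = (∑ k ∈ Finset.range (n+1), (1 - t)^k) * (pmap n UV)^4 := by
      calc pmap n Y = (t * (∑ k ∈ Finset.range (n+1), (1 - t)^k)) * pmap n Y := by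
            rw [htg]; ring
        _ = (∑ k ∈ Finset.range (n+1), (1 - t)^k) * (t * pmap n Y) := by ring
        _ = _ := by rw [hty]
    rw [hYe]
    exact mul_mem hg (pow_mem hUV 4)
  have hall : ∀ s : Ssub, pmap n s ∈ (phibar n).range := by
    rintro ⟨s, hs⟩
    refine Algebra.adjoin_induction (p := fun x hx => pmap n ⟨x, hx⟩ ∈ (phibar n).range)
      (fun x hx => ?_) (fun r => ?_) (fun x y hx' hy' hx hy => ?_)
      (fun x y hx' hy' hx hy => ?_) hs
    · rcases hx with rfl | rfl | rfl
      · exact hU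
      · exact hY
      · exact hUV
    · show pmap n (algebraMap ℂ Ssub r) ∈ (phibar n).range
      rw [AlgHom.commutes]
      exact Subalgebra.algebraMap_mem _ r
    · show pmap n (⟨x, hx'⟩ + ⟨y, hy'⟩) ∈ (phibar n).range
      rw [map_add]; exact add_mem hx hy
    · have := mul_mem hx hy
      rw [← map_mul] at this
      exact this
  intro z
  obtain ⟨s, rfl⟩ := Ideal.Quotient.mk_surjective z
  obtain ⟨w, hw⟩ := hall s
  exact ⟨w, hw⟩

/-- for every integer `n ≥ 1`, the quotient `S/J_n` is a finite-dimensional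
`ℂ`-vector space of dimension `(n+1)(n+2)/2`. -/
theorem finrank_quotient_Jid (n : ℕ) (hn : 1 ≤ n) :
    FiniteDimensional ℂ (Ssub ⧸ Jid n) ∧
    Module.finrank ℂ (Ssub ⧸ Jid n) = (n + 1) * (n + 2) / 2 := by
  have hinj : Function.Injective (phibar n) :=
    Function.LeftInverse.injective (g := psibar n)
      (fun q => AlgHom.congr_fun (psibar_phibar n) q)
  have e : Qr n ≃ₐ[ℂ] (Ssub ⧸ Jid n) :=
    AlgEquiv.ofBijective (phibar n) ⟨hinj, phibar_surj n⟩
  have el : Qr n ≃ₗ[ℂ] (Ssub ⧸ Jid n) := e.toLinearEquiv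
  constructor
  · exact el.finiteDimensional
  · rw [← LinearEquiv.finrank_eq el, finrank_Qr]

end
end

section
/- For every integer n ≥ 1, let g_n := (uv−1)^{n−1}·(u³v⁴ + u − 4uv + 2) ∈ ℂ[u,v]. Then g_n ∈ J_n; the exponents (n+2, n+3) and (n, n−1) both lie in the monomial support of g_n; (n+2, n+3) is the ≺-leading exponent of g_n, it has coefficient 1 in g_n, and it belongs to P_n; and every exponent in the support of g_n other than (n+2, n+3) lies in D_n. -/
set_option synthInstance.maxHeartbeats 1000000
set_option maxHeartbeats 1000000

open Pointwise MvPolynomial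

/-- The monomial ordering `≺` on exponents in `ℤ²`, associated to the matrix with rows
`(2,-1)` and `(1,1)`: `β ≺ α` iff `2β₁−β₂ < 2α₁−α₂`, or `2β₁−β₂ = 2α₁−α₂` and
`β₁+β₂ < α₁+α₂`. -/
def precLt (b a : ℤ × ℤ) : Prop :=
  2 * b.1 - b.2 < 2 * a.1 - a.2 ∨
    (2 * b.1 - b.2 = 2 * a.1 - a.2 ∧ b.1 + b.2 < a.1 + a.2)

/-- The monomial support of `f ∈ ℂ[u,v]`, as a finite set of points of `ℤ²`. -/
noncomputable def suppZ (f : CuvPoly) : Finset (ℤ × ℤ) :=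
  f.support.image (fun m => ((m 0 : ℤ), (m 1 : ℤ)))

/-- `α` is the `≺`-leading exponent of `f`: it lies in the support of `f` and is
`≺`-greater than every other exponent in the support. -/
def IsLeadExp (f : CuvPoly) (α : ℤ × ℤ) : Prop :=
  α ∈ suppZ f ∧ ∀ β ∈ suppZ f, β ≠ α → precLt β α

/-- The coefficient of the monomial `u^{α₁} v^{α₂}` in `f`. -/
noncomputable def coeffAt (f : CuvPoly) (α : ℤ × ℤ) : ℂ :=
  MvPolynomial.coeff (Finsupp.single 0 α.1.toNat + Finsupp.single 1 α.2.toNat) f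

/-- `g_n = (uv−1)^{n−1} · (u³v⁴ + u − 4uv + 2)` as an element of `S`. -/
noncomputable def Gn (n : ℕ) : Ssub := (UV - 1) ^ (n - 1) * (Y + U - 4 * UV + 2)

/-! The factor `h = u³v⁴ + u − 4uv + 2` of `g_n` lies in `I²`: with `t = uv − 1` and
`u · u³v⁴ = (uv)⁴` one has `h = 6t² + 4t³ + t⁴ − (u − 1)(u³v⁴ − 1)`, so `g_n = t^{n−1} h ∈ I^{n−1} I² ⊆ J_n`.
Expanding `(uv − 1)^{n−1}` binomially, every exponent of `g_n` is one of `(k+3, k+4)`, `(k+1, k)`,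
`(k+1, k+1)`, `(k, k)` with `0 ≤ k < n`, and the two exponents with `k = n − 1` of largest weight
`2a − b = n + 1` each occur only once, with coefficient `1`. Every point of `P_n + σ_Z` satisfies
`4a − 3b ≥ n + 4`, or `b ≥ n + 1` and `2a − b ≥ n + 1`: the points of `P_n` do, and these linear
forms are nonnegative on `σ_Z`. None of the exponents of `g_n` other than `(n+2, n+3)` does. -/

open Finset

section Ideal

variable {R : Type*} [CommRing R]

theorem add_sub_four_mul_add_two_mem_sq {I : Ideal R} {x y z : R} (hx : x - 1 ∈ I)
    (hy : y - 1 ∈ I) (hz : z - 1 ∈ I) (hxyz : x * y = z ^ 4) :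
    y + x - 4 * z + 2 ∈ I ^ 2 := by
  have key : y + x - 4 * z + 2 =
      (6 + 4 * (z - 1) + (z - 1) ^ 2) * (z - 1) ^ 2 - (x - 1) * (y - 1) := by
    linear_combination hxyz
  rw [key]
  refine sub_mem (Ideal.mul_mem_left _ _ (Ideal.pow_mem_pow hz 2)) ?_
  rw [pow_two]
  exact Ideal.mul_mem_mul hx hy

end Ideal

theorem Gn_mem_Jid (n : ℕ) : Gn n ∈ Jid n := by
  have hU : U - 1 ∈ Iid := Ideal.subset_span (by simp)
  have hY : Y - 1 ∈ Iid := Ideal.subset_span (by simp)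
  have hUV : UV - 1 ∈ Iid := Ideal.subset_span (by simp)
  have hUY : U * Y = UV ^ 4 := by
    apply Subtype.ext
    simp only [U, Y, UV, Subalgebra.coe_mul, Subalgebra.coe_pow]
    ring
  refine Ideal.pow_le_pow_right (by omega : n + 1 ≤ n - 1 + 2) ?_
  rw [Gn, pow_add]
  exact Ideal.mul_mem_mul (Ideal.pow_mem_pow hUV _) (add_sub_four_mul_add_two_mem_sq hU hY hUV hUY)

noncomputable def uvExp (a b : ℕ) : Fin 2 →₀ ℕ := Finsupp.single 0 a + Finsupp.single 1 b

@[simp] theorem uvExp_apply_zero (a b : ℕ) : uvExp a b 0 = a := by simp [uvExp]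

@[simp] theorem uvExp_apply_one (a b : ℕ) : uvExp a b 1 = b := by simp [uvExp]

theorem uvExp_eq (m : Fin 2 →₀ ℕ) : uvExp (m 0) (m 1) = m := by
  ext i
  fin_cases i <;> simp

theorem uvExp_inj {a b c d : ℕ} : uvExp a b = uvExp c d ↔ a = c ∧ b = d := by
  refine ⟨fun h => ⟨?_, ?_⟩, fun ⟨rfl, rfl⟩ => rfl⟩
  · simpa using congrArg (· 0) h
  · simpa using congrArg (· 1) h

theorem monomial_uvExp (a b : ℕ) (c : ℂ) : monomial (uvExp a b) c = C c * (uP ^ a * vP ^ b) := by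
  rw [uP, vP, X_pow_eq_monomial, X_pow_eq_monomial, monomial_mul, one_mul, C_mul_monomial,
    mul_one, uvExp]

theorem mem_suppZ_iff {f : CuvPoly} {β : ℤ × ℤ} (h1 : 0 ≤ β.1) (h2 : 0 ≤ β.2) :
    β ∈ suppZ f ↔ coeffAt f β ≠ 0 := by
  obtain ⟨⟨a, b⟩, rfl⟩ : ∃ p : ℕ × ℕ, β = ((p.1 : ℤ), (p.2 : ℤ)) :=
    ⟨(β.1.toNat, β.2.toNat), by ext <;> simp [h1, h2]⟩
  simp only [suppZ, coeffAt, mem_image, mem_support_iff, Int.toNat_natCast, Prod.mk.injEq,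
    Nat.cast_inj]
  refine ⟨fun ⟨m, hm, hm0, hm1⟩ => ?_, fun h => ⟨uvExp a b, h, by simp⟩⟩
  subst hm0 hm1
  rwa [← uvExp_eq m] at hm

theorem exists_of_mem_suppZ {f : CuvPoly} {β : ℤ × ℤ} (h : β ∈ suppZ f) :
    ∃ a b : ℕ, β = ((a : ℤ), (b : ℤ)) ∧ coeff (uvExp a b) f ≠ 0 := by
  obtain ⟨m, hm, rfl⟩ := mem_image.1 h
  exact ⟨m 0, m 1, rfl, by rwa [uvExp_eq, ← mem_support_iff]⟩

noncomputable def hPoly : CuvPoly := uP ^ 3 * vP ^ 4 + uP - 4 * (uP * vP) + 2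

theorem coe_Gn (n : ℕ) : (Gn n : CuvPoly) = (uP * vP - 1) ^ (n - 1) * hPoly := by
  rw [Gn, hPoly]
  push_cast
  rfl

theorem uv_sub_one_pow_mul_hPoly (m : ℕ) :
    (uP * vP - 1) ^ m * hPoly = ∑ k ∈ range (m + 1), C ((-1) ^ (k + m) * m.choose k : ℂ) *
      (monomial (uvExp (k + 3) (k + 4)) 1 + monomial (uvExp (k + 1) k) 1
        - monomial (uvExp (k + 1) (k + 1)) 4 + monomial (uvExp k k) 2) := by
  rw [sub_pow, sum_mul]
  refine sum_congr rfl fun k _ => ?_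
  simp only [monomial_uvExp, hPoly, map_mul, map_pow, map_neg, map_one, map_natCast, map_ofNat]
  ring

theorem coeff_uv_sub_one_pow_mul_hPoly (m a b : ℕ) :
    coeff (uvExp a b) ((uP * vP - 1) ^ m * hPoly) =
      ∑ k ∈ range (m + 1), (-1 : ℂ) ^ (k + m) * m.choose k *
        ((if k + 3 = a ∧ k + 4 = b then 1 else 0) + (if k + 1 = a ∧ k = b then 1 else 0)
          - (if k + 1 = a ∧ k + 1 = b then 4 else 0) + (if k = a ∧ k = b then 2 else 0)) := by
  simp only [uv_sub_one_pow_mul_hPoly, coeff_sum, coeff_C_mul, coeff_add, coeff_sub,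
    coeff_monomial, uvExp_inj]

theorem coeff_uv_sub_one_pow_mul_hPoly_lead (m : ℕ) :
    coeff (uvExp (m + 3) (m + 4)) ((uP * vP - 1) ^ m * hPoly) = 1 := by
  rw [coeff_uv_sub_one_pow_mul_hPoly, sum_eq_single_of_mem m (self_mem_range_succ m)]
  · simp [← two_mul]
  · intro k hk hkm
    rw [mem_range] at hk
    split_ifs <;> first | omega | simp

theorem coeff_uv_sub_one_pow_mul_hPoly_second (m : ℕ) :
    coeff (uvExp (m + 1) m) ((uP * vP - 1) ^ m * hPoly) = 1 := by
  rw [coeff_uv_sub_one_pow_mul_hPoly, sum_eq_single_of_mem m (self_mem_range_succ m)]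
  · simp [← two_mul]
  · intro k hk hkm
    rw [mem_range] at hk
    split_ifs <;> first | omega | simp

theorem exists_of_coeff_uv_sub_one_pow_mul_hPoly_ne_zero {m a b : ℕ}
    (h : coeff (uvExp a b) ((uP * vP - 1) ^ m * hPoly) ≠ 0) :
    ∃ k ≤ m, (a = k + 3 ∧ b = k + 4) ∨ (a = k + 1 ∧ b = k) ∨ (a = k + 1 ∧ b = k + 1) ∨
      (a = k ∧ b = k) := by
  rw [coeff_uv_sub_one_pow_mul_hPoly] at h
  obtain ⟨k, hk, hne⟩ := exists_ne_zero_of_sum_ne_zero h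
  refine ⟨k, Nat.lt_succ_iff.1 (mem_range.1 hk), ?_⟩
  by_contra! hc
  apply hne
  split_ifs <;> first | omega | simp

theorem coeffAt_natCast (f : CuvPoly) (a b : ℕ) :
    coeffAt f ((a : ℤ), (b : ℤ)) = coeff (uvExp a b) f := by
  simp [coeffAt, uvExp]

theorem coeffAt_Gn_lead {n : ℕ} (hn : 1 ≤ n) :
    coeffAt (Gn n : CuvPoly) ((n : ℤ) + 2, (n : ℤ) + 3) = 1 := by
  obtain ⟨m, rfl⟩ := Nat.exists_eq_add_of_le' hn
  rw [show (((m + 1 : ℕ) : ℤ) + 2, ((m + 1 : ℕ) : ℤ) + 3) = (((m + 3 : ℕ) : ℤ), ((m + 4 : ℕ) : ℤ))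
    by push_cast; ring_nf, coeffAt_natCast, coe_Gn, Nat.add_sub_cancel,
    coeff_uv_sub_one_pow_mul_hPoly_lead]

theorem coeffAt_Gn_second {n : ℕ} (hn : 1 ≤ n) :
    coeffAt (Gn n : CuvPoly) ((n : ℤ), (n : ℤ) - 1) = 1 := by
  obtain ⟨m, rfl⟩ := Nat.exists_eq_add_of_le' hn
  rw [show (((m + 1 : ℕ) : ℤ), ((m + 1 : ℕ) : ℤ) - 1) = (((m + 1 : ℕ) : ℤ), ((m : ℕ) : ℤ))
    by push_cast; ring_nf, coeffAt_natCast, coe_Gn, Nat.add_sub_cancel,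
    coeff_uv_sub_one_pow_mul_hPoly_second]

theorem exists_of_mem_suppZ_Gn {n : ℕ} (hn : 1 ≤ n) {β : ℤ × ℤ}
    (hβ : β ∈ suppZ (Gn n : CuvPoly)) :
    ∃ k : ℤ, 0 ≤ k ∧ k + 1 ≤ n ∧
      (β = (k + 3, k + 4) ∨ β = (k + 1, k) ∨ β = (k + 1, k + 1) ∨ β = (k, k)) := by
  obtain ⟨a, b, rfl, hab⟩ := exists_of_mem_suppZ hβ
  rw [coe_Gn] at hab
  obtain ⟨k, hk, hcases⟩ := exists_of_coeff_uv_sub_one_pow_mul_hPoly_ne_zero hab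
  refine ⟨k, k.cast_nonneg, by omega, ?_⟩
  rcases hcases with ⟨rfl, rfl⟩ | ⟨rfl, rfl⟩ | ⟨rfl, rfl⟩ | ⟨rfl, rfl⟩ <;> simp

theorem precLt_of_mem_suppZ_Gn {n : ℕ} (hn : 1 ≤ n) {β : ℤ × ℤ}
    (hβ : β ∈ suppZ (Gn n : CuvPoly)) (hne : β ≠ ((n : ℤ) + 2, (n : ℤ) + 3)) :
    precLt β ((n : ℤ) + 2, (n : ℤ) + 3) := by
  obtain ⟨k, hk0, hkn, hβ | hβ | hβ | hβ⟩ := exists_of_mem_suppZ_Gn hn hβ <;>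
    subst hβ <;> simp only [precLt, ne_eq, Prod.mk.injEq] at hne ⊢ <;> omega

def PsetBound (n : ℤ) : Set (ℤ × ℤ) :=
  {β | n + 4 ≤ 4 * β.1 - 3 * β.2 ∨ (n + 1 ≤ β.2 ∧ n + 1 ≤ 2 * β.1 - β.2)}

theorem Pset_subset_PsetBound {n : ℤ} (hn : 0 ≤ n) : Pset n ⊆ PsetBound n := by
  rintro p (((rfl | rfl) | ⟨i, hi, -, rfl⟩) | ⟨j, hj, -, rfl⟩)
  all_goals
    simp only [PsetBound, pPt, sPt, qPt, rPt, Set.mem_ofPred_eq]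
    try split_ifs with h <;> rw [Int.odd_iff] at h
  all_goals omega

theorem PsetBound_add_sigmaZ_subset (n : ℤ) : PsetBound n + sigmaZ ⊆ PsetBound n := by
  rintro _ ⟨p, hp, s, ⟨hs2, hs1⟩, rfl⟩
  simp only [PsetBound, Set.mem_ofPred_eq, Prod.fst_add, Prod.snd_add] at hp ⊢
  omega

theorem Pset_add_sigmaZ_subset {n : ℤ} (hn : 0 ≤ n) : Pset n + sigmaZ ⊆ PsetBound n :=
  (Set.add_subset_add_right (Pset_subset_PsetBound hn)).trans (PsetBound_add_sigmaZ_subset n)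

theorem mem_Dset_of_mem_suppZ_Gn {n : ℕ} (hn : 1 ≤ n) {β : ℤ × ℤ}
    (hβ : β ∈ suppZ (Gn n : CuvPoly)) (hne : β ≠ ((n : ℤ) + 2, (n : ℤ) + 3)) :
    β ∈ Dset n := by
  refine ⟨?_, fun hP => ?_⟩
  · obtain ⟨k, hk0, hkn, hβ | hβ | hβ | hβ⟩ := exists_of_mem_suppZ_Gn hn hβ <;>
      subst hβ <;> simp only [sigmaZ, Set.mem_ofPred_eq] <;> omega
  · have hbound := Pset_add_sigmaZ_subset n.cast_nonneg hP
    obtain ⟨k, hk0, hkn, hβ | hβ | hβ | hβ⟩ := exists_of_mem_suppZ_Gn hn hβ <;>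
      subst hβ <;> simp only [PsetBound, Set.mem_ofPred_eq, ne_eq, Prod.mk.injEq] at hne hbound <;>
      omega

theorem lead_mem_Pset {n : ℤ} (hn : 1 ≤ n) : (n + 2, n + 3) ∈ Pset n := by
  rcases hn.eq_or_lt with rfl | hn
  · exact Or.inl (Or.inl (Or.inr rfl))
  · refine Or.inr ⟨1, zero_le_one, ?_, by rw [rPt]; ring_nf⟩
    split_ifs with h <;> rw [Int.odd_iff] at h <;> omega

/-- for every integer `n ≥ 1`, `g_n := (uv−1)^{n−1}(u³v⁴ + u − 4uv + 2)`
lies in `J_n`; the exponents `(n+2, n+3)` and `(n, n−1)` lie in the support of `g_n`;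
`(n+2, n+3)` is the `≺`-leading exponent of `g_n`, with coefficient `1`, and lies in `P_n`;
and every other exponent in the support of `g_n` lies in `D_n`. -/
theorem Gn_leading_data (n : ℕ) (hn : 1 ≤ n) :
    Gn n ∈ Jid n ∧
    ((n : ℤ) + 2, (n : ℤ) + 3) ∈ suppZ (Gn n : CuvPoly) ∧
    ((n : ℤ), (n : ℤ) - 1) ∈ suppZ (Gn n : CuvPoly) ∧
    IsLeadExp (Gn n : CuvPoly) ((n : ℤ) + 2, (n : ℤ) + 3) ∧
    coeffAt (Gn n : CuvPoly) ((n : ℤ) + 2, (n : ℤ) + 3) = 1 ∧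
    ((n : ℤ) + 2, (n : ℤ) + 3) ∈ Pset (n : ℤ) ∧
    ∀ β ∈ suppZ (Gn n : CuvPoly), β ≠ ((n : ℤ) + 2, (n : ℤ) + 3) → β ∈ Dset (n : ℤ) := by
  have hlead : ((n : ℤ) + 2, (n : ℤ) + 3) ∈ suppZ (Gn n : CuvPoly) :=
    (mem_suppZ_iff (by omega) (by omega)).2 (by rw [coeffAt_Gn_lead hn]; exact one_ne_zero)
  have hsecond : ((n : ℤ), (n : ℤ) - 1) ∈ suppZ (Gn n : CuvPoly) :=
    (mem_suppZ_iff (by omega) (by omega)).2 (by rw [coeffAt_Gn_second hn]; exact one_ne_zero)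
  exact ⟨Gn_mem_Jid n, hlead, hsecond, ⟨hlead, fun _ => precLt_of_mem_suppZ_Gn hn⟩,
    coeffAt_Gn_lead hn, lead_mem_Pset (by exact_mod_cast hn),
    fun _ => mem_Dset_of_mem_suppZ_Gn hn⟩
end
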